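/- arXiv:0912.1722 — 8 statements merged into one kernel-verified Lean document; each statement's English description precedes it below -/
import Mathlib

section
/- Under the stated hypotheses on r, if c = 3m then lim_{ρ→c⁺} A(ρ) = 1/r'(c)^2; if c > 3m then A(ρ) → +∞ as ρ → c⁺; and if c < 3m then A(ρ) → −∞ as ρ → c⁺. -/
open MeasureTheory Filter


lemma rUB (c b k : ℝ) (r r' : ℝ → ℝ)
    (hr : ∀ ρ ∈ Set.Ici c, HasDerivWithinAt r (r' ρ) (Set.Ici c) ρ)
    (hrc : r c = 0)
    (hub : ∀ z ∈ Set.Icc c b, r' z ≤ k) :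
    ∀ z ∈ Set.Icc c b, r z ≤ k * (z - c) := by
  have hcont : ContinuousOn r (Set.Icc c b) := fun x hx =>
    ((hr x hx.1).continuousWithinAt).mono (fun y hy => hy.1)
  have hmono : MonotoneOn (fun z => k * (z - c) - r z) (Set.Icc c b) := by
    apply monotoneOn_of_hasDerivWithinAt_nonneg (convex_Icc c b)
      (f' := fun z => k - r' z)
    · exact (continuousOn_const.mul (continuousOn_id.sub continuousOn_const)).sub hcont
    · intro x hx
      rw [interior_Icc] at hx ⊢
      have h1 : HasDerivWithinAt r (r' x) (Set.Ioo c b) x :=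
        (hr x (le_of_lt hx.1)).mono (fun y hy => le_of_lt hy.1)
      have h2 : HasDerivWithinAt (fun z => k * (z - c)) k (Set.Ioo c b) x := by
        simpa using (((hasDerivWithinAt_id x (Set.Ioo c b)).sub_const c).const_mul k)
      exact h2.sub h1
    · intro x hx
      rw [interior_Icc] at hx
      have := hub x ⟨le_of_lt hx.1, le_of_lt hx.2⟩
      simp only [sub_nonneg]; linarith
  intro z hz
  have h0 : c ∈ Set.Icc c b := ⟨le_refl c, le_trans hz.1 hz.2⟩
  have := hmono h0 hz hz.1
  simp only [hrc, sub_self, mul_zero, sub_zero, zero_sub] at this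
  linarith

lemma rLB (c b k : ℝ) (r r' : ℝ → ℝ)
    (hr : ∀ ρ ∈ Set.Ici c, HasDerivWithinAt r (r' ρ) (Set.Ici c) ρ)
    (hrc : r c = 0)
    (hlb : ∀ z ∈ Set.Icc c b, k ≤ r' z) :
    ∀ z ∈ Set.Icc c b, k * (z - c) ≤ r z := by
  have hcont : ContinuousOn r (Set.Icc c b) := fun x hx =>
    ((hr x hx.1).continuousWithinAt).mono (fun y hy => hy.1)
  have hmono : MonotoneOn (fun z => r z - k * (z - c)) (Set.Icc c b) := by
    apply monotoneOn_of_hasDerivWithinAt_nonneg (convex_Icc c b)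
      (f' := fun z => r' z - k)
    · exact hcont.sub (continuousOn_const.mul (continuousOn_id.sub continuousOn_const))
    · intro x hx
      rw [interior_Icc] at hx ⊢
      have h1 : HasDerivWithinAt r (r' x) (Set.Ioo c b) x :=
        (hr x (le_of_lt hx.1)).mono (fun y hy => le_of_lt hy.1)
      have h2 : HasDerivWithinAt (fun z => k * (z - c)) k (Set.Ioo c b) x := by
        simpa using (((hasDerivWithinAt_id x (Set.Ioo c b)).sub_const c).const_mul k)
      exact h1.sub h2
    · intro x hx
      rw [interior_Icc] at hx
      have := hlb x ⟨le_of_lt hx.1, le_of_lt hx.2⟩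
      simp only [sub_nonneg]; linarith
  intro z hz
  have h0 : c ∈ Set.Icc c b := ⟨le_refl c, le_trans hz.1 hz.2⟩
  have := hmono h0 hz hz.1
  simp only [hrc, sub_self, mul_zero, sub_zero, zero_sub] at this
  linarith

lemma intJ (c ρ b : ℝ) (hρ : c < ρ) (hρb : ρ ≤ b) (n : ℤ) (hn : n ≠ -1) :
    ∫ z in Set.Ioc ρ b, (z - c) ^ n = ((b-c)^(n+1) - (ρ-c)^(n+1))/(n+1) := by
  rw [← intervalIntegral.integral_of_le hρb]
  rw [intervalIntegral.integral_comp_sub_right (fun x => x ^ n) c]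
  rw [integral_zpow]
  right
  refine ⟨hn, ?_⟩
  rw [Set.mem_uIcc]
  push_neg
  constructor <;> intro h <;> linarith [h, hρ, hρb]

lemma zpow_inv_eq (x : ℝ) (n : ℕ) : x ^ (-(n:ℤ)) = (x ^ n)⁻¹ := by
  rw [zpow_neg, zpow_natCast]

lemma intJ3 (c ρ b : ℝ) (hρ : c < ρ) (hρb : ρ ≤ b) :
    ∫ z in Set.Ioc ρ b, ((z - c) ^ 3)⁻¹ = (((ρ-c)^2)⁻¹ - ((b-c)^2)⁻¹)/2 := by
  have h := intJ c ρ b hρ hρb (-3) (by norm_num)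
  simp only [show (-3:ℤ) = -(3:ℕ) by norm_num, zpow_inv_eq, show (-(3:ℕ):ℤ)+1 = -(2:ℕ) by norm_num] at h
  rw [h]
  push_cast
  ring
lemma intJ4 (c ρ b : ℝ) (hρ : c < ρ) (hρb : ρ ≤ b) :
    ∫ z in Set.Ioc ρ b, ((z - c) ^ 4)⁻¹ = (((ρ-c)^3)⁻¹ - ((b-c)^3)⁻¹)/3 := by
  have h := intJ c ρ b hρ hρb (-4) (by norm_num)
  simp only [show (-4:ℤ) = -(4:ℕ) by norm_num, zpow_inv_eq, show (-(4:ℕ):ℤ)+1 = -(3:ℕ) by norm_num] at h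
  rw [h]
  push_cast
  ring


set_option maxHeartbeats 1000000 in
/-- Behavior of `A(ρ) = 2 r²(ρ) ∫_ρ^∞ (z - 3m)/r⁴(z) dz` as `ρ → c⁺`:
if `c = 3m` then `A → 1/r'(c)²`; if `c > 3m` then `A → +∞`; if `c < 3m` then `A → −∞`. -/
theorem stmt2 (c m : ℝ) (hc : 0 < c)
    (r r' : ℝ → ℝ)
    (hr : ∀ ρ ∈ Set.Ici c, HasDerivWithinAt r (r' ρ) (Set.Ici c) ρ)
    (hr' : ContinuousOn r' (Set.Ici c))
    (hr'gt : ∀ ρ ∈ Set.Ici c, 1 < r' ρ)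
    (hrc : r c = 0)
    (hrpos : ∀ ρ ∈ Set.Ioi c, 0 < r ρ)
    (hrinf : Tendsto (fun ρ => r ρ / ρ) atTop (nhds 1))
    (hint : ∀ ρ ∈ Set.Ioi c,
      IntegrableOn (fun z => (z - 3 * m) / r z ^ 4) (Set.Ioi ρ))
    (A : ℝ → ℝ)
    (hA : ∀ ρ ∈ Set.Ioi c,
      A ρ = 2 * r ρ ^ 2 * ∫ z in Set.Ioi ρ, (z - 3 * m) / r z ^ 4) :
    (c = 3 * m → Tendsto A (nhdsWithin c (Set.Ioi c)) (nhds (1 / r' c ^ 2))) ∧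
    (3 * m < c → Tendsto A (nhdsWithin c (Set.Ioi c)) atTop) ∧
    (c < 3 * m → Tendsto A (nhdsWithin c (Set.Ioi c)) atBot) := by
  set L := r' c with hLdef
  have hL1 : 1 < L := hr'gt c Set.self_mem_Ici
  -- ε-δ linear bounds on r near c
  have hδε : ∀ ε > 0, ∃ δ > 0, ∀ z ∈ Set.Icc c (c+δ),
      (L - ε) * (z - c) ≤ r z ∧ r z ≤ (L + ε) * (z - c) := by
    intro ε hε
    have hc' : ContinuousWithinAt r' (Set.Ici c) c := hr' c Set.self_mem_Ici
    rw [Metric.continuousWithinAt_iff] at hc'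
    obtain ⟨δ, hδpos, hδ⟩ := hc' ε hε
    refine ⟨δ/2, by positivity, fun z hz => ?_⟩
    have hub : ∀ y ∈ Set.Icc c (c+δ/2), r' y ≤ L + ε := by
      intro y hy
      have h := hδ hy.1 (by rw [Real.dist_eq, abs_of_nonneg (by linarith [hy.1])]; linarith [hy.2])
      rw [Real.dist_eq, abs_lt] at h
      linarith [h.2]
    have hlb : ∀ y ∈ Set.Icc c (c+δ/2), L - ε ≤ r' y := by
      intro y hy
      have h := hδ hy.1 (by rw [Real.dist_eq, abs_of_nonneg (by linarith [hy.1])]; linarith [hy.2])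
      rw [Real.dist_eq, abs_lt] at h
      linarith [h.1]
    exact ⟨rLB c (c+δ/2) (L-ε) r r' hr hrc hlb z hz,
           rUB c (c+δ/2) (L+ε) r r' hr hrc hub z hz⟩
  have hrge : ∀ z ∈ Set.Ici c, z - c ≤ r z := by
    intro z hz
    have := rLB c z 1 r r' hr hrc (fun y hy => le_of_lt (hr'gt y hy.1)) z ⟨hz, le_rfl⟩
    linarith
  have hIntPow : ∀ (ρ b : ℝ), c < ρ → ∀ n : ℕ,
      IntegrableOn (fun z => ((z - c)^n)⁻¹) (Set.Ioc ρ b) := by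
    intro ρ b hρ n
    apply IntegrableOn.mono_set ?_ Set.Ioc_subset_Icc_self
    apply ContinuousOn.integrableOn_Icc
    apply ContinuousOn.inv₀
    · exact (continuousOn_id.sub continuousOn_const).pow n
    · intro x hx
      have : 0 < x - c := by linarith [hx.1]
      positivity
  have hfI : ∀ ρ b, c < ρ → IntegrableOn (fun z => (z-3*m)/r z^4) (Set.Ioc ρ b) :=
    fun ρ b hρ => (hint ρ hρ).mono_set Set.Ioc_subset_Ioi_self
  have hsplit : ∀ ρ b, c < ρ → ρ ≤ b →
      ∫ z in Set.Ioi ρ, (z - 3*m)/r z^4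
        = (∫ z in Set.Ioc ρ b, (z-3*m)/r z^4) + ∫ z in Set.Ioi b, (z-3*m)/r z^4 := by
    intro ρ b hρ hρb
    rw [← Set.Ioc_union_Ioi_eq_Ioi hρb,
      MeasureTheory.setIntegral_union (Set.Ioc_disjoint_Ioi le_rfl) measurableSet_Ioi
        ((hint ρ hρ).mono_set Set.Ioc_subset_Ioi_self)
        ((hint ρ hρ).mono_set (Set.Ioi_subset_Ioi hρb))]
  have htend0 : Tendsto (fun ρ => ρ - c) (nhdsWithin c (Set.Ioi c)) (nhdsWithin 0 (Set.Ioi 0)) := by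
    apply tendsto_nhdsWithin_of_tendsto_nhds_of_eventually_within
    · have : Tendsto (fun ρ : ℝ => ρ - c) (nhds c) (nhds (c - c)) :=
        (continuous_sub_right c).tendsto c
      simpa using this.mono_left nhdsWithin_le_nhds
    · exact eventually_mem_nhdsWithin.mono (fun x hx => by simp only [Set.mem_Ioi] at hx ⊢; linarith)
  have hinv_top : Tendsto (fun ρ => (ρ - c)⁻¹) (nhdsWithin c (Set.Ioi c)) atTop :=
    tendsto_inv_nhdsGT_zero.comp htend0
  refine ⟨?_, ?_, ?_⟩
  · -- c = 3m
    intro hcm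
    rw [Metric.tendsto_nhds]
    intro ε' hε'
    -- choose ε via continuity of the bound functions at 0
    have hPQ : ∀ ε : ℝ, (L+ε)^2 * ((L-ε)^4)⁻¹ = (fun t : ℝ => (L+t)^2 * ((L-t)^4)⁻¹) ε := fun _ => rfl
    have hL0 : (L:ℝ) ≠ 0 := by linarith
    have hUc : Tendsto (fun t : ℝ => (L+t)^2 * ((L-t)^4)⁻¹) (nhds 0) (nhds (1/L^2)) := by
      have hcont : ContinuousAt (fun t : ℝ => (L+t)^2 * ((L-t)^4)⁻¹) 0 := by
        apply ContinuousAt.mul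
        · exact ((continuous_const.add continuous_id).pow 2).continuousAt
        · apply ContinuousAt.inv₀ ((continuous_const.sub continuous_id).pow 4).continuousAt
          show (L - (0:ℝ))^4 ≠ 0
          rw [sub_zero]
          exact pow_ne_zero 4 (ne_of_gt (by linarith))
      have hval : (fun t : ℝ => (L+t)^2 * ((L-t)^4)⁻¹) 0 = 1/L^2 := by
        simp only [add_zero, sub_zero]
        field_simp
      rw [← hval]
      exact hcont.tendsto
    have hVc : Tendsto (fun t : ℝ => (L-t)^2 * ((L+t)^4)⁻¹) (nhds 0) (nhds (1/L^2)) := by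
      have hcont : ContinuousAt (fun t : ℝ => (L-t)^2 * ((L+t)^4)⁻¹) 0 := by
        apply ContinuousAt.mul
        · exact ((continuous_const.sub continuous_id).pow 2).continuousAt
        · apply ContinuousAt.inv₀ ((continuous_const.add continuous_id).pow 4).continuousAt
          show (L + (0:ℝ))^4 ≠ 0
          rw [add_zero]
          exact pow_ne_zero 4 (ne_of_gt (by linarith))
      have hval : (fun t : ℝ => (L-t)^2 * ((L+t)^4)⁻¹) 0 = 1/L^2 := by
        simp only [add_zero, sub_zero]
        field_simp
      rw [← hval]
      exact hcont.tendsto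
    have hev1 : ∀ᶠ t in nhdsWithin (0:ℝ) (Set.Ioi 0),
        (L+t)^2 * ((L-t)^4)⁻¹ < 1/L^2 + ε'/3 :=
      (hUc.mono_left nhdsWithin_le_nhds).eventually_lt_const (by linarith)
    have hev2 : ∀ᶠ t in nhdsWithin (0:ℝ) (Set.Ioi 0),
        1/L^2 - ε'/3 < (L-t)^2 * ((L+t)^4)⁻¹ :=
      (hVc.mono_left nhdsWithin_le_nhds).eventually_const_lt (by linarith)
    have hev3 : ∀ᶠ t in nhdsWithin (0:ℝ) (Set.Ioi 0), t ∈ Set.Ioo (0:ℝ) (L-1) :=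
      eventually_of_mem (Ioo_mem_nhdsGT_of_mem ⟨le_rfl, by linarith⟩) (fun x hx => hx)
    obtain ⟨ε, hεU, hεV, hε0, hεL⟩ :
        ∃ ε : ℝ, ((L+ε)^2 * ((L-ε)^4)⁻¹ < 1/L^2 + ε'/3) ∧
          (1/L^2 - ε'/3 < (L-ε)^2 * ((L+ε)^4)⁻¹) ∧ 0 < ε ∧ ε < L - 1 := by
      obtain ⟨ε, h1, h2, h3⟩ := ((hev1.and hev2).and hev3).exists
      exact ⟨ε, h1.1, h1.2, h2, h3⟩
    obtain ⟨δ, hδpos, hδ⟩ := hδε ε hε0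
    set b := c + δ with hbdef
    have hb : c < b := by simp only [hbdef]; linarith
    set P := L - ε with hPdef
    set Q := L + ε with hQdef
    have hP : 1 < P := by simp only [hPdef]; linarith
    have hP0 : 0 < P := by linarith
    have hQ0 : 0 < Q := by simp only [hQdef]; linarith
    set U := Q^2 * (P^4)⁻¹ with hUdef
    set V := P^2 * (Q^4)⁻¹ with hVdef
    have hUnn : 0 ≤ U := by positivity
    have hVnn : 0 ≤ V := by positivity
    set C := |∫ z in Set.Ioi b, (z-3*m)/r z^4| with hCdef
    have hC : 0 ≤ C := abs_nonneg _
    -- eventual smallness of corrections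
    have hgev : ∀ᶠ ρ in nhdsWithin c (Set.Ioi c), 2*Q^2*(ρ-c)^2*C < ε'/3 := by
      have ht : Tendsto (fun ρ => 2*Q^2*(ρ-c)^2*C) (nhdsWithin c (Set.Ioi c))
          (nhds (2*Q^2*(c-c)^2*C)) :=
        ((continuous_const.mul ((continuous_sub_right c).pow 2)).mul continuous_const)
          |>.tendsto c |>.mono_left nhdsWithin_le_nhds
      have ht' : Tendsto (fun ρ => 2*Q^2*(ρ-c)^2*C) (nhdsWithin c (Set.Ioi c)) (nhds 0) := by
        simpa using ht
      exact ht'.eventually_lt_const (by linarith)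
    have hhev : ∀ᶠ ρ in nhdsWithin c (Set.Ioi c), V * ((ρ-c)^2 * ((b-c)^2)⁻¹) < ε'/3 := by
      have ht : Tendsto (fun ρ => V * ((ρ-c)^2 * ((b-c)^2)⁻¹)) (nhdsWithin c (Set.Ioi c))
          (nhds (V * ((c-c)^2 * ((b-c)^2)⁻¹))) :=
        (continuous_const.mul (((continuous_sub_right c).pow 2).mul continuous_const))
          |>.tendsto c |>.mono_left nhdsWithin_le_nhds
      have ht' : Tendsto (fun ρ => V * ((ρ-c)^2 * ((b-c)^2)⁻¹)) (nhdsWithin c (Set.Ioi c))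
          (nhds 0) := by simpa using ht
      exact ht'.eventually_lt_const (by linarith)
    filter_upwards [Ioo_mem_nhdsGT_of_mem ⟨le_rfl, hb⟩, hgev, hhev] with ρ hρmem hgρ hhρ
    have hρc : c < ρ := hρmem.1
    have hρb : ρ < b := hρmem.2
    have hρc' : (0:ℝ) < ρ - c := by linarith
    have hbc : (0:ℝ) < b - c := by linarith
    have hJ3 := intJ3 c ρ b hρc (le_of_lt hρb)
    have hJnn : 0 ≤ (((ρ-c)^2)⁻¹ - ((b-c)^2)⁻¹)/2 := by
      have : ((b-c)^2)⁻¹ ≤ ((ρ-c)^2)⁻¹ := by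
        apply inv_anti₀ (by positivity)
        apply pow_le_pow_left₀ (le_of_lt hρc') (by linarith) 2
      linarith
    -- pointwise bounds on the integrand over Ioc ρ b
    have hbnd : ∀ z ∈ Set.Ioc ρ b,
        ((Q^4)⁻¹) * ((z-c)^3)⁻¹ ≤ (z-3*m)/r z^4 ∧
        (z-3*m)/r z^4 ≤ ((P^4)⁻¹) * ((z-c)^3)⁻¹ := by
      intro z hz
      have hzc : c < z := lt_trans hρc hz.1
      have hzc' : (0:ℝ) < z - c := by linarith
      have hzne : z - c ≠ 0 := ne_of_gt hzc'
      have hzb : z ∈ Set.Icc c (c+δ) := ⟨le_of_lt hzc, by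
        have := hz.2; simp only [hbdef] at this ⊢; linarith⟩
      obtain ⟨hlo, hup⟩ := hδ z hzb
      have hrz : 0 < r z := hrpos z hzc
      have hnum : z - 3*m = z - c := by rw [hcm]
      have h4lo : P^4 * (z-c)^4 ≤ r z ^ 4 := by
        calc P^4 * (z-c)^4 = (P * (z-c))^4 := by ring
        _ ≤ r z ^ 4 := pow_le_pow_left₀ (by positivity) hlo 4
      have h4up : r z ^ 4 ≤ Q^4 * (z-c)^4 := by
        calc r z ^ 4 ≤ (Q * (z-c))^4 := pow_le_pow_left₀ (le_of_lt hrz) hup 4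
        _ = Q^4 * (z-c)^4 := by ring
      constructor
      · rw [hnum]
        calc ((Q^4)⁻¹) * ((z-c)^3)⁻¹ = (z-c)/(Q^4 * (z-c)^4) := by
              field_simp
        _ ≤ (z-c)/(r z^4) :=
              div_le_div_of_nonneg_left (le_of_lt hzc') (by positivity) h4up
      · rw [hnum]
        calc (z-c)/(r z^4) ≤ (z-c)/(P^4 * (z-c)^4) :=
              div_le_div_of_nonneg_left (le_of_lt hzc') (by positivity) h4lo
        _ = ((P^4)⁻¹) * ((z-c)^3)⁻¹ := by
              field_simp
    have hup : (∫ z in Set.Ioc ρ b, (z-3*m)/r z^4)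
        ≤ ((P^4)⁻¹) * ((((ρ-c)^2)⁻¹ - ((b-c)^2)⁻¹)/2) := by
      rw [← hJ3, ← integral_const_mul]
      apply setIntegral_mono_on (hfI ρ b hρc) ((hIntPow ρ b hρc 3).const_mul _) measurableSet_Ioc
      exact fun z hz => (hbnd z hz).2
    have hlo : ((Q^4)⁻¹) * ((((ρ-c)^2)⁻¹ - ((b-c)^2)⁻¹)/2)
        ≤ ∫ z in Set.Ioc ρ b, (z-3*m)/r z^4 := by
      rw [← hJ3, ← integral_const_mul]
      apply setIntegral_mono_on ((hIntPow ρ b hρc 3).const_mul _) (hfI ρ b hρc) measurableSet_Ioc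
      exact fun z hz => (hbnd z hz).1
    have hIρb_nn : 0 ≤ ∫ z in Set.Ioc ρ b, (z-3*m)/r z^4 :=
      le_trans (by positivity) hlo
    -- r ρ bounds
    obtain ⟨hrlo, hrup⟩ := hδ ρ ⟨le_of_lt hρc, by
      have := hρb; simp only [hbdef] at this ⊢; linarith⟩
    have hrρ0 : 0 < r ρ := hrpos ρ hρc
    have hr2lo : P^2 * (ρ-c)^2 ≤ r ρ^2 := by
      calc P^2 * (ρ-c)^2 = (P * (ρ-c))^2 := by ring
      _ ≤ r ρ^2 := pow_le_pow_left₀ (by positivity) hrlo 2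
    have hr2up : r ρ^2 ≤ Q^2 * (ρ-c)^2 := by
      calc r ρ^2 ≤ (Q * (ρ-c))^2 := pow_le_pow_left₀ (le_of_lt hrρ0) hrup 2
      _ = Q^2 * (ρ-c)^2 := by ring
    -- tail term bound
    set I₂ := ∫ z in Set.Ioi b, (z-3*m)/r z^4 with hI2def
    have htail : |2 * r ρ^2 * I₂| ≤ 2*Q^2*(ρ-c)^2*C := by
      rw [abs_mul, abs_of_nonneg (by positivity : (0:ℝ) ≤ 2 * r ρ^2)]
      calc 2 * r ρ^2 * |I₂| ≤ (2 * (Q^2*(ρ-c)^2)) * |I₂| := by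
            apply mul_le_mul_of_nonneg_right (by linarith) (abs_nonneg _)
      _ = 2*Q^2*(ρ-c)^2*C := by rw [hCdef]; ring
    -- main product bounds
    set J := (((ρ-c)^2)⁻¹ - ((b-c)^2)⁻¹)/2 with hJdef
    have hmain_up : 2 * r ρ^2 * (∫ z in Set.Ioc ρ b, (z-3*m)/r z^4) ≤ U := by
      have s1 : 2 * r ρ^2 * (∫ z in Set.Ioc ρ b, (z-3*m)/r z^4)
          ≤ (2 * (Q^2 * (ρ-c)^2)) * ((P^4)⁻¹ * J) := by
        apply mul_le_mul (by linarith) hup hIρb_nn (by positivity)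
      have e : (2 * (Q^2 * (ρ-c)^2)) * ((P^4)⁻¹ * J)
          = U * (1 - (ρ-c)^2 * ((b-c)^2)⁻¹) := by
        simp only [hJdef, hUdef]
        field_simp
      have hfrac : 0 ≤ U * ((ρ-c)^2 * ((b-c)^2)⁻¹) :=
        mul_nonneg hUnn (by positivity)
      have e2 : U * (1 - (ρ-c)^2 * ((b-c)^2)⁻¹)
          = U - U * ((ρ-c)^2 * ((b-c)^2)⁻¹) := by ring
      have s2 := e ▸ s1
      linarith [s2, hfrac, e2]
    have hmain_lo : V - V * ((ρ-c)^2 * ((b-c)^2)⁻¹)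
        ≤ 2 * r ρ^2 * (∫ z in Set.Ioc ρ b, (z-3*m)/r z^4) := by
      have s1 : (2 * (P^2 * (ρ-c)^2)) * ((Q^4)⁻¹ * J)
          ≤ 2 * r ρ^2 * (∫ z in Set.Ioc ρ b, (z-3*m)/r z^4) := by
        apply mul_le_mul (by linarith) hlo (by positivity) (by positivity)
      have e : (2 * (P^2 * (ρ-c)^2)) * ((Q^4)⁻¹ * J)
          = V - V * ((ρ-c)^2 * ((b-c)^2)⁻¹) := by
        simp only [hJdef, hVdef]
        field_simp
      linarith [e ▸ s1]
    -- assemble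
    have hAρ := hA ρ hρc
    rw [Real.dist_eq, abs_lt]
    have hsplitρ := hsplit ρ b hρc (le_of_lt hρb)
    have hAexp : A ρ = 2 * r ρ^2 * (∫ z in Set.Ioc ρ b, (z-3*m)/r z^4) + 2 * r ρ^2 * I₂ := by
      rw [hAρ, hsplitρ, hI2def]
      ring
    have htail' := abs_le.1 (le_of_lt (lt_of_le_of_lt htail hgρ))
    constructor
    · have : 1/L^2 - ε' < V - ε'/3 - ε'/3 := by linarith
      have hAlo : V - ε'/3 - ε'/3 ≤ A ρ := by
        rw [hAexp]
        have := htail'.1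
        linarith [hmain_lo, hhρ]
      linarith
    · have hAup : A ρ ≤ U + ε'/3 := by
        rw [hAexp]
        have := htail'.2
        linarith [hmain_up]
      linarith
  · -- 3m < c : A → +∞
    intro hm
    obtain ⟨δ₀, hδ₀pos, hδ₀⟩ := hδε 1 one_pos
    set b := c + δ₀ with hbdef
    have hb : c < b := by simp only [hbdef]; linarith
    set M := L + 1 with hMdef
    have hM : 0 < M := by linarith
    have hcm : 0 < c - 3*m := by linarith
    set K := 2*(c - 3*m)/(3*M^4) with hKdef
    have hK : 0 < K := by positivity
    set φ : ℝ → ℝ := fun ρ => (-K) * ((ρ-c)^2 * ((b-c)^3)⁻¹) + K * (ρ - c)⁻¹ with hφdef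
    have hφtop : Tendsto φ (nhdsWithin c (Set.Ioi c)) atTop := by
      have h1 : Tendsto (fun ρ => K * (ρ - c)⁻¹) (nhdsWithin c (Set.Ioi c)) atTop :=
        hinv_top.const_mul_atTop hK
      have h2 : Tendsto (fun ρ => (-K) * ((ρ-c)^2 * ((b-c)^3)⁻¹)) (nhdsWithin c (Set.Ioi c))
          (nhds ((-K) * ((c-c)^2 * ((b-c)^3)⁻¹))) := by
        exact (continuous_const.mul (((continuous_sub_right c).pow 2).mul continuous_const))
          |>.tendsto c |>.mono_left nhdsWithin_le_nhds
      have h2' : Tendsto (fun ρ => (-K) * ((ρ-c)^2 * ((b-c)^3)⁻¹)) (nhdsWithin c (Set.Ioi c))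
          (nhds 0) := by simpa using h2
      exact h2'.add_atTop h1
    apply tendsto_atTop_mono' _ ?_ hφtop
    filter_upwards [Ioo_mem_nhdsGT_of_mem ⟨le_rfl, hb⟩] with ρ hρmem
    have hρc : c < ρ := hρmem.1
    have hρb : ρ < b := hρmem.2
    have hρc' : (0:ℝ) < ρ - c := by linarith
    have hbc : (0:ℝ) < b - c := by linarith
    -- tail nonneg
    have htail : 0 ≤ ∫ z in Set.Ioi b, (z-3*m)/r z^4 := by
      apply setIntegral_nonneg measurableSet_Ioi
      intro z hz
      have hz' : c < z := lt_trans hb hz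
      have := hrpos z hz'
      have : 0 < r z ^ 4 := by positivity
      apply div_nonneg (by linarith) (le_of_lt this)
    -- main integral lower bound
    have hJ4 := intJ4 c ρ b hρc (le_of_lt hρb)
    have hmain : ((c-3*m)*(M^4)⁻¹) * ((((ρ-c)^3)⁻¹ - ((b-c)^3)⁻¹)/3)
        ≤ ∫ z in Set.Ioc ρ b, (z-3*m)/r z^4 := by
      rw [← hJ4, ← integral_const_mul]
      apply setIntegral_mono_on ((hIntPow ρ b hρc 4).const_mul _) (hfI ρ b hρc) measurableSet_Ioc
      intro z hz
      have hzc : c < z := lt_trans hρc hz.1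
      have hzc' : (0:ℝ) < z - c := by linarith
      have hrz : 0 < r z := hrpos z hzc
      have hrzub : r z ≤ M * (z - c) := by
        have := (hδ₀ z ⟨le_of_lt hzc, by simp only [hbdef] at hz; linarith [hz.2]⟩).2
        simpa [hMdef] using this
      have h4 : r z ^ 4 ≤ M^4 * (z-c)^4 := by
        calc r z ^ 4 ≤ (M * (z-c))^4 := pow_le_pow_left₀ (le_of_lt hrz) hrzub 4
        _ = M^4 * (z-c)^4 := by ring
      have h5 : (c-3*m)/(M^4*(z-c)^4) ≤ (c-3*m)/(r z^4) :=
        div_le_div_of_nonneg_left (le_of_lt hcm) (by positivity) h4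
      have h6 : (c-3*m)/(r z^4) ≤ (z-3*m)/(r z^4) := by
        have h7 : (0:ℝ) < r z ^4 := by positivity
        have h8 : c - 3*m ≤ z - 3*m := by linarith
        gcongr
      calc ((c-3*m)*(M^4)⁻¹) * ((z-c)^4)⁻¹ = (c-3*m)/(M^4*(z-c)^4) := by
            rw [div_eq_mul_inv, mul_inv]; ring
        _ ≤ (c-3*m)/(r z^4) := h5
        _ ≤ (z-3*m)/(r z^4) := h6
    have hJ4nn : 0 ≤ (((ρ-c)^3)⁻¹ - ((b-c)^3)⁻¹)/3 := by
      have : ((b-c)^3)⁻¹ ≤ ((ρ-c)^3)⁻¹ := by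
        apply inv_anti₀ (by positivity)
        apply pow_le_pow_left₀ (le_of_lt hρc') (by linarith) 3
      linarith
    have hrρ : ρ - c ≤ r ρ := hrge ρ (le_of_lt hρc)
    have hrρ2 : (ρ-c)^2 ≤ r ρ^2 := pow_le_pow_left₀ (le_of_lt hρc') hrρ 2
    have hAρ := hA ρ hρc
    rw [hAρ, hsplit ρ b hρc (le_of_lt hρb)]
    have hIρb_nn : 0 ≤ ∫ z in Set.Ioc ρ b, (z-3*m)/r z^4 := le_trans (by positivity) hmain
    have step1 : 2 * (ρ-c)^2 * (((c-3*m)*(M^4)⁻¹) * ((((ρ-c)^3)⁻¹ - ((b-c)^3)⁻¹)/3))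
        ≤ 2 * r ρ^2 * ((∫ z in Set.Ioc ρ b, (z-3*m)/r z^4) + ∫ z in Set.Ioi b, (z-3*m)/r z^4) := by
      have e1 : 2 * (ρ-c)^2 * (((c-3*m)*(M^4)⁻¹) * ((((ρ-c)^3)⁻¹ - ((b-c)^3)⁻¹)/3))
          ≤ 2 * r ρ^2 * (((c-3*m)*(M^4)⁻¹) * ((((ρ-c)^3)⁻¹ - ((b-c)^3)⁻¹)/3)) := by
        apply mul_le_mul_of_nonneg_right (by linarith) (by positivity)
      have e2 : 2 * r ρ^2 * (((c-3*m)*(M^4)⁻¹) * ((((ρ-c)^3)⁻¹ - ((b-c)^3)⁻¹)/3))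
          ≤ 2 * r ρ^2 * ((∫ z in Set.Ioc ρ b, (z-3*m)/r z^4) + ∫ z in Set.Ioi b, (z-3*m)/r z^4) := by
        apply mul_le_mul_of_nonneg_left (by linarith) (by positivity)
      linarith
    refine le_trans ?_ step1
    have e : φ ρ = 2 * (ρ-c)^2 * (((c-3*m)*(M^4)⁻¹) * ((((ρ-c)^3)⁻¹ - ((b-c)^3)⁻¹)/3)) := by
      simp only [hφdef, hKdef]
      field_simp
      ring
    rw [e]
  · -- c < 3m : A → -∞
    intro hm
    obtain ⟨δ₀, hδ₀pos, hδ₀⟩ := hδε 1 one_pos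
    set γ := (3*m - c)/2 with hγdef
    have hγ : 0 < γ := by simp only [hγdef]; linarith
    set b := c + min δ₀ γ with hbdef
    have hb : c < b := by
      simp only [hbdef]
      have := lt_min hδ₀pos hγ
      linarith [lt_min hδ₀pos hγ]
    have hbb : b ≤ c + δ₀ := by simp only [hbdef]; linarith [min_le_left δ₀ γ]
    have hbm : b ≤ 3*m - γ := by
      simp only [hbdef, hγdef]
      have := min_le_right δ₀ ((3*m-c)/2)
      linarith
    set M := L + 1 with hMdef
    have hM : 0 < M := by linarith
    set K := 2*γ/(3*M^4) with hKdef
    have hK : 0 < K := by positivity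
    set C := |∫ z in Set.Ioi b, (z-3*m)/r z^4| with hCdef
    have hC : 0 ≤ C := abs_nonneg _
    set φ : ℝ → ℝ := fun ρ => (K * ((ρ-c)^2 * ((b-c)^3)⁻¹) + 2*M^2*(ρ-c)^2*C) + (-K) * (ρ - c)⁻¹
      with hφdef
    have hφbot : Tendsto φ (nhdsWithin c (Set.Ioi c)) atBot := by
      have h1 : Tendsto (fun ρ => (-K) * (ρ - c)⁻¹) (nhdsWithin c (Set.Ioi c)) atBot :=
        Tendsto.const_mul_atTop_of_neg (by linarith) hinv_top
      have h2 : Tendsto (fun ρ => K * ((ρ-c)^2 * ((b-c)^3)⁻¹) + 2*M^2*(ρ-c)^2*C)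
          (nhdsWithin c (Set.Ioi c))
          (nhds (K * ((c-c)^2 * ((b-c)^3)⁻¹) + 2*M^2*(c-c)^2*C)) := by
        exact ((continuous_const.mul (((continuous_sub_right c).pow 2).mul continuous_const)).add
          ((continuous_const.mul (((continuous_sub_right c).pow 2))).mul continuous_const))
          |>.tendsto c |>.mono_left nhdsWithin_le_nhds
      have h2' : Tendsto (fun ρ => K * ((ρ-c)^2 * ((b-c)^3)⁻¹) + 2*M^2*(ρ-c)^2*C)
          (nhdsWithin c (Set.Ioi c)) (nhds 0) := by simpa using h2
      exact h2'.add_atBot h1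
    apply tendsto_atBot_mono' _ ?_ hφbot
    filter_upwards [Ioo_mem_nhdsGT_of_mem ⟨le_rfl, hb⟩] with ρ hρmem
    have hρc : c < ρ := hρmem.1
    have hρb : ρ < b := hρmem.2
    have hρc' : (0:ℝ) < ρ - c := by linarith
    have hbc : (0:ℝ) < b - c := by linarith
    have hJ4 := intJ4 c ρ b hρc (le_of_lt hρb)
    have hJ4nn : 0 ≤ (((ρ-c)^3)⁻¹ - ((b-c)^3)⁻¹)/3 := by
      have : ((b-c)^3)⁻¹ ≤ ((ρ-c)^3)⁻¹ := by
        apply inv_anti₀ (by positivity)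
        apply pow_le_pow_left₀ (le_of_lt hρc') (by linarith) 3
      linarith
    -- main integral upper bound
    have hmain : (∫ z in Set.Ioc ρ b, (z-3*m)/r z^4)
        ≤ ((-γ)*(M^4)⁻¹) * ((((ρ-c)^3)⁻¹ - ((b-c)^3)⁻¹)/3) := by
      rw [← hJ4, ← integral_const_mul]
      apply setIntegral_mono_on (hfI ρ b hρc) ((hIntPow ρ b hρc 4).const_mul _) measurableSet_Ioc
      intro z hz
      have hzc : c < z := lt_trans hρc hz.1
      have hzc' : (0:ℝ) < z - c := by linarith
      have hrz : 0 < r z := hrpos z hzc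
      have hrz4 : (0:ℝ) < r z ^ 4 := by positivity
      have hrzub : r z ≤ M * (z - c) := by
        have := (hδ₀ z ⟨le_of_lt hzc, by linarith [hz.2, hbb]⟩).2
        simpa [hMdef] using this
      have h4 : r z ^ 4 ≤ M^4 * (z-c)^4 := by
        calc r z ^ 4 ≤ (M * (z-c))^4 := pow_le_pow_left₀ (le_of_lt hrz) hrzub 4
        _ = M^4 * (z-c)^4 := by ring
      have hznum : z - 3*m ≤ -γ := by linarith [hz.2, hbm]
      have h6 : (z-3*m)/(r z^4) ≤ (-γ)/(r z^4) := by gcongr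
      have h5 : γ/(M^4*(z-c)^4) ≤ γ/(r z^4) :=
        div_le_div_of_nonneg_left (le_of_lt hγ) (by positivity) h4
      calc (z-3*m)/(r z^4) ≤ (-γ)/(r z^4) := h6
        _ ≤ (-γ)/(M^4*(z-c)^4) := by
            rw [neg_div, neg_div]; linarith
        _ = ((-γ)*(M^4)⁻¹) * ((z-c)^4)⁻¹ := by
            rw [div_eq_mul_inv, mul_inv]; ring
    have hrρ : ρ - c ≤ r ρ := hrge ρ (le_of_lt hρc)
    have hrρ2 : (ρ-c)^2 ≤ r ρ^2 := pow_le_pow_left₀ (le_of_lt hρc') hrρ 2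
    have hrρub : r ρ ≤ M * (ρ - c) := by
      have := (hδ₀ ρ ⟨le_of_lt hρc, by linarith [hbb]⟩).2
      simpa [hMdef] using this
    have hrρ2ub : r ρ^2 ≤ M^2 * (ρ-c)^2 := by
      calc r ρ ^ 2 ≤ (M * (ρ-c))^2 := pow_le_pow_left₀ (by linarith) hrρub 2
      _ = M^2 * (ρ-c)^2 := by ring
    have hAρ := hA ρ hρc
    rw [hAρ, hsplit ρ b hρc (le_of_lt hρb)]
    set Z := ((-γ)*(M^4)⁻¹) * ((((ρ-c)^3)⁻¹ - ((b-c)^3)⁻¹)/3) with hZdef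
    have hZ0 : Z ≤ 0 := by
      simp only [hZdef]
      apply mul_nonpos_of_nonpos_of_nonneg
      · have : (0:ℝ) < (M^4)⁻¹ := by positivity
        nlinarith
      · exact hJ4nn
    set I₂ := ∫ z in Set.Ioi b, (z-3*m)/r z^4 with hI2def
    have hI2C : I₂ ≤ C := le_abs_self _
    have hr2nn : (0:ℝ) ≤ 2 * r ρ^2 := by positivity
    have step1 : 2 * r ρ^2 * ((∫ z in Set.Ioc ρ b, (z-3*m)/r z^4) + I₂)
        ≤ 2 * (ρ-c)^2 * Z + 2*M^2*(ρ-c)^2*C := by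
      have e1 : 2 * r ρ^2 * ((∫ z in Set.Ioc ρ b, (z-3*m)/r z^4) + I₂)
          ≤ 2 * r ρ^2 * (Z + C) := by
        apply mul_le_mul_of_nonneg_left (by linarith [hmain, hI2C]) hr2nn
      have e2 : 2 * r ρ^2 * Z ≤ 2 * (ρ-c)^2 * Z :=
        mul_le_mul_of_nonpos_right (by linarith) hZ0
      have e3 : 2 * r ρ^2 * C ≤ 2 * M^2 * (ρ-c)^2 * C :=
        mul_le_mul_of_nonneg_right (by nlinarith) hC
      refine le_trans e1 ?_
      have e4 : 2 * r ρ^2 * (Z + C) = 2 * r ρ^2 * Z + 2 * r ρ^2 * C := by ring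
      rw [e4]
      exact add_le_add e2 e3
    refine le_trans step1 ?_
    have e : 2 * (ρ-c)^2 * Z + 2*M^2*(ρ-c)^2*C = φ ρ := by
      simp only [hZdef, hφdef, hKdef]
      field_simp
      ring
    rw [e]
end

section
/- Under the stated hypotheses, lim_{ρ→c⁺} r(ρ) A(ρ) = 2(c − 3m)/(3 r'(c)). Consequently, for c ≠ 3m, A(ρ) is asymptotic to (2(c−3m)/(3 r'(c))) · 1/r(ρ) as ρ → c⁺. -/
/-!
Near `c` we have `r z ≈ r'(c) (z - c)`, so the integrand is `K (z - c)⁻⁴ + o((z - c)⁻⁴)` with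
`K = (c - 3m) / r'(c)⁴`. The model term has tail integral exactly `K (ρ - c)⁻³ / 3`; the remainder
has tail integral `o((ρ - c)⁻³)`, because on `(ρ, d]` it is at most `ε` times the model and the
integral over `(d, ∞)` is a constant. Multiplying by `r(ρ)³ ≈ r'(c)³ (ρ - c)³` gives the limit.
-/

open MeasureTheory Filter Set Topology

section PowerTail

variable {c : ℝ} {n : ℕ}

theorem hasDerivAt_neg_inv_sub_pow_div (hn : n ≠ 0) {z : ℝ} (hz : z ≠ c) :
    HasDerivAt (fun x => -((x - c) ^ n)⁻¹ / n) ((z - c) ^ (n + 1))⁻¹ z := by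
  have hzc : z - c ≠ 0 := sub_ne_zero.mpr hz
  have h := ((((hasDerivAt_id' z).sub_const c).fun_pow n).fun_inv
    (pow_ne_zero n hzc)).fun_neg.div_const (n : ℝ)
  refine h.congr_deriv ?_
  obtain ⟨k, rfl⟩ := Nat.exists_eq_add_one_of_ne_zero hn
  rw [Nat.add_sub_cancel]
  field_simp
  ring

theorem tendsto_neg_inv_sub_pow_div_atTop (hn : n ≠ 0) :
    Tendsto (fun x => -((x - c) ^ n)⁻¹ / n) atTop (𝓝 0) := by
  have := ((tendsto_pow_atTop hn).comp
    (tendsto_atTop_add_const_right atTop (-c) tendsto_id)).inv_tendsto_atTop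
  simpa [sub_eq_add_neg] using this.neg.div_const (n : ℝ)

theorem integrableOn_Ioi_inv_sub_pow (hn : n ≠ 0) {ρ : ℝ} (hρ : c < ρ) :
    IntegrableOn (fun z => ((z - c) ^ (n + 1))⁻¹) (Ioi ρ) := by
  refine integrableOn_Ioi_deriv_of_nonneg'
    (fun z hz => hasDerivAt_neg_inv_sub_pow_div hn (hρ.trans_le hz).ne') (fun z hz => ?_)
    (tendsto_neg_inv_sub_pow_div_atTop hn)
  have : 0 < z - c := sub_pos.mpr (hρ.trans hz)
  positivity

theorem integral_Ioi_inv_sub_pow (hn : n ≠ 0) {ρ : ℝ} (hρ : c < ρ) :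
    ∫ z in Ioi ρ, ((z - c) ^ (n + 1))⁻¹ = ((ρ - c) ^ n)⁻¹ / n := by
  rw [integral_Ioi_of_hasDerivAt_of_tendsto'
    (fun z hz => hasDerivAt_neg_inv_sub_pow_div hn (hρ.trans_le hz).ne')
    (integrableOn_Ioi_inv_sub_pow hn hρ) (tendsto_neg_inv_sub_pow_div_atTop hn)]
  ring

theorem abs_setIntegral_Ioi_le_of_abs_le (hn : n ≠ 0) {h : ℝ → ℝ} {ρ d ε : ℝ} (hε : 0 ≤ ε)
    (hρ : c < ρ) (hρd : ρ ≤ d) (hint : IntegrableOn h (Ioi ρ))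
    (hbound : ∀ z ∈ Ioc ρ d, |h z| ≤ ε * ((z - c) ^ (n + 1))⁻¹) :
    |∫ z in Ioi ρ, h z| ≤ ε * (((ρ - c) ^ n)⁻¹ / n) + |∫ z in Ioi d, h z| := by
  rw [← Ioc_union_Ioi_eq_Ioi hρd, setIntegral_union (Ioc_disjoint_Ioi le_rfl) measurableSet_Ioi
    (hint.mono_set Ioc_subset_Ioi_self) (hint.mono_set (Ioi_subset_Ioi hρd))]
  refine (abs_add_le _ _).trans (add_le_add_left ?_ _)
  have hg : IntegrableOn (fun z => ε * ((z - c) ^ (n + 1))⁻¹) (Ioi ρ) :=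
    (integrableOn_Ioi_inv_sub_pow hn hρ).const_mul ε
  calc |∫ z in Ioc ρ d, h z|
      ≤ ∫ z in Ioc ρ d, ε * ((z - c) ^ (n + 1))⁻¹ := by
        rw [← Real.norm_eq_abs]
        exact norm_integral_le_of_norm_le (hg.mono_set Ioc_subset_Ioi_self)
          ((ae_restrict_iff' measurableSet_Ioc).mpr
            (.of_forall fun z hz => (Real.norm_eq_abs _).trans_le (hbound z hz)))
    _ ≤ ∫ z in Ioi ρ, ε * ((z - c) ^ (n + 1))⁻¹ := by
        refine setIntegral_mono_set hg ((ae_restrict_iff' measurableSet_Ioi).mpr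
          (.of_forall fun z hz => ?_)) Ioc_subset_Ioi_self.eventuallyLE
        have : 0 < z - c := sub_pos.mpr (hρ.trans hz)
        positivity
    _ = ε * (((ρ - c) ^ n)⁻¹ / n) := by
        rw [integral_const_mul, integral_Ioi_inv_sub_pow hn hρ]

theorem tendsto_sub_pow_mul_setIntegral_Ioi_of_tendsto_zero (hn : n ≠ 0) {h : ℝ → ℝ}
    (hint : ∀ ρ ∈ Ioi c, IntegrableOn h (Ioi ρ))
    (hh : Tendsto (fun z => (z - c) ^ (n + 1) * h z) (𝓝[>] c) (𝓝 0)) :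
    Tendsto (fun ρ => (ρ - c) ^ n * ∫ z in Ioi ρ, h z) (𝓝[>] c) (𝓝 0) := by
  rw [Metric.tendsto_nhds]
  intro ε hε
  have hsmall : ∀ᶠ z in 𝓝[>] c, |(z - c) ^ (n + 1) * h z| ≤ ε / 2 := by
    filter_upwards [Metric.tendsto_nhds.mp hh (ε / 2) (half_pos hε)] with z hz
    simpa only [Real.dist_eq, sub_zero] using hz.le
  obtain ⟨d, hd, hdsub⟩ := mem_nhdsGT_iff_exists_Ioc_subset.mp hsmall
  set C := |∫ z in Ioi d, h z|
  have htail : Tendsto (fun ρ => (ρ - c) ^ n * C) (𝓝[>] c) (𝓝 0) := by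
    have : Tendsto (fun ρ => (ρ - c) ^ n * C) (𝓝 c) (𝓝 ((c - c) ^ n * C)) :=
      (((continuous_id.sub continuous_const).pow n).mul continuous_const).tendsto c
    simpa [hn] using this.mono_left nhdsWithin_le_nhds
  filter_upwards [Ioo_mem_nhdsGT hd, htail.eventually (gt_mem_nhds (half_pos hε))]
    with ρ hρ htailρ
  have hρc : 0 < ρ - c := sub_pos.mpr hρ.1
  have hbound : ∀ z ∈ Ioc ρ d, |h z| ≤ ε / 2 * ((z - c) ^ (n + 1))⁻¹ := by
    intro z hz
    have hzc : 0 < (z - c) ^ (n + 1) := pow_pos (sub_pos.mpr (hρ.1.trans hz.1)) _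
    have : |(z - c) ^ (n + 1) * h z| ≤ ε / 2 := hdsub ⟨hρ.1.trans hz.1, hz.2⟩
    rw [abs_mul, abs_of_pos hzc] at this
    rw [← div_eq_mul_inv, le_div_iff₀ hzc]
    linarith
  have key := abs_setIntegral_Ioi_le_of_abs_le hn (half_pos hε).le hρ.1 hρ.2.le (hint ρ hρ.1) hbound
  have hn1 : (1 : ℝ) ≤ n := Nat.one_le_cast.mpr (Nat.one_le_iff_ne_zero.mpr hn)
  rw [Real.dist_eq, sub_zero, abs_mul, abs_of_pos (pow_pos hρc n)]
  calc (ρ - c) ^ n * |∫ z in Ioi ρ, h z|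
      ≤ (ρ - c) ^ n * (ε / 2 * (((ρ - c) ^ n)⁻¹ / n) + C) :=
        mul_le_mul_of_nonneg_left key (by positivity)
    _ = ε / 2 / n + (ρ - c) ^ n * C := by field_simp
    _ < ε := by
        have : ε / 2 / n ≤ ε / 2 := div_le_self (by positivity) hn1
        linarith

theorem tendsto_sub_pow_mul_setIntegral_Ioi (hn : n ≠ 0) {f : ℝ → ℝ} {K : ℝ}
    (hint : ∀ ρ ∈ Ioi c, IntegrableOn f (Ioi ρ))
    (hf : Tendsto (fun z => (z - c) ^ (n + 1) * f z) (𝓝[>] c) (𝓝 K)) :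
    Tendsto (fun ρ => (ρ - c) ^ n * ∫ z in Ioi ρ, f z) (𝓝[>] c) (𝓝 (K / n)) := by
  have hgint (ρ : ℝ) (hρ : ρ ∈ Ioi c) :
      IntegrableOn (fun z => K * ((z - c) ^ (n + 1))⁻¹) (Ioi ρ) :=
    (integrableOn_Ioi_inv_sub_pow hn hρ).const_mul K
  have hrem : Tendsto (fun z => (z - c) ^ (n + 1) * (f z - K * ((z - c) ^ (n + 1))⁻¹))
      (𝓝[>] c) (𝓝 0) := by
    refine (sub_self K ▸ hf.sub_const K).congr' ?_
    filter_upwards [self_mem_nhdsWithin] with z hz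
    have : (z - c) ^ (n + 1) ≠ 0 := pow_ne_zero _ (sub_pos.mpr hz).ne'
    field_simp
  refine (zero_add (K / n) ▸ (tendsto_sub_pow_mul_setIntegral_Ioi_of_tendsto_zero hn
    (fun ρ hρ => (hint ρ hρ).sub (hgint ρ hρ)) hrem).add_const (K / n)).congr' ?_
  filter_upwards [self_mem_nhdsWithin] with ρ hρ
  have : (ρ - c) ^ n ≠ 0 := pow_ne_zero _ (sub_pos.mpr hρ).ne'
  simp only [Pi.sub_apply]
  rw [integral_sub (hint ρ hρ) (hgint ρ hρ), integral_const_mul, integral_Ioi_inv_sub_pow hn hρ]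
  field_simp
  ring

end PowerTail

theorem tendsto_div_sub_nhdsGT_of_hasDerivWithinAt {r : ℝ → ℝ} {c R : ℝ}
    (hr : HasDerivWithinAt r R (Ici c) c) (hrc : r c = 0) :
    Tendsto (fun ρ => r ρ / (ρ - c)) (𝓝[>] c) (𝓝 R) := by
  rw [hasDerivWithinAt_iff_tendsto_slope, Ici_sdiff_left] at hr
  refine hr.congr fun ρ => ?_
  rw [slope_def_field, hrc, sub_zero]

theorem tendsto_pow_three_mul_setIntegral_Ioi {r : ℝ → ℝ} {c m R : ℝ} (hR : R ≠ 0)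
    (hslope : Tendsto (fun ρ => r ρ / (ρ - c)) (𝓝[>] c) (𝓝 R))
    (hint : ∀ ρ ∈ Ioi c, IntegrableOn (fun z => (z - 3 * m) / r z ^ 4) (Ioi ρ)) :
    Tendsto (fun ρ => r ρ ^ 3 * ∫ z in Ioi ρ, (z - 3 * m) / r z ^ 4) (𝓝[>] c)
      (𝓝 ((c - 3 * m) / (3 * R))) := by
  have hlin : Tendsto (fun z => z - 3 * m) (𝓝[>] c) (𝓝 (c - 3 * m)) :=
    ((continuous_id.sub continuous_const).tendsto c).mono_left nhdsWithin_le_nhds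
  have hweight : Tendsto (fun z => (z - c) ^ (3 + 1) * ((z - 3 * m) / r z ^ 4)) (𝓝[>] c)
      (𝓝 ((c - 3 * m) * R⁻¹ ^ 4)) := by
    refine (hlin.mul ((hslope.inv₀ hR).pow 4)).congr fun z => ?_
    rw [inv_div, div_pow]
    ring
  have := (hslope.pow 3).mul (tendsto_sub_pow_mul_setIntegral_Ioi three_ne_zero hint hweight)
  convert this.congr' ?_ using 2
  · push_cast
    field_simp
  · filter_upwards [self_mem_nhdsWithin] with ρ hρ
    have : ρ - c ≠ 0 := (sub_pos.mpr hρ).ne'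
    field_simp

theorem stmt3_general (c m : ℝ)
    (r r' : ℝ → ℝ)
    (hr : ∀ ρ ∈ Set.Ici c, HasDerivWithinAt r (r' ρ) (Set.Ici c) ρ)
    (hr'gt : ∀ ρ ∈ Set.Ici c, 1 < r' ρ)
    (hrc : r c = 0)
    (hint : ∀ ρ ∈ Set.Ioi c,
      IntegrableOn (fun z => (z - 3 * m) / r z ^ 4) (Set.Ioi ρ))
    (A : ℝ → ℝ)
    (hA : ∀ ρ ∈ Set.Ioi c,
      A ρ = 2 * r ρ ^ 2 * ∫ z in Set.Ioi ρ, (z - 3 * m) / r z ^ 4) :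
    Tendsto (fun ρ => r ρ * A ρ) (nhdsWithin c (Set.Ioi c))
      (nhds (2 * (c - 3 * m) / (3 * r' c))) ∧
    (c ≠ 3 * m →
      Tendsto (fun ρ => A ρ / ((2 * (c - 3 * m) / (3 * r' c)) / r ρ))
        (nhdsWithin c (Set.Ioi c)) (nhds 1)) := by
  have hR : r' c ≠ 0 := (one_pos.trans (hr'gt c self_mem_Ici)).ne'
  have hcube := tendsto_pow_three_mul_setIntegral_Ioi hR
    (tendsto_div_sub_nhdsGT_of_hasDerivWithinAt (hr c self_mem_Ici) hrc) hint
  have hmain : Tendsto (fun ρ => r ρ * A ρ) (𝓝[>] c) (𝓝 (2 * (c - 3 * m) / (3 * r' c))) := by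
    rw [mul_div_assoc]
    refine (hcube.const_mul 2).congr' ?_
    filter_upwards [self_mem_nhdsWithin] with ρ hρ
    rw [hA ρ hρ]
    ring
  refine ⟨hmain, fun hcm => ?_⟩
  have hL : 2 * (c - 3 * m) / (3 * r' c) ≠ 0 := by
    have := sub_ne_zero.mpr hcm
    positivity
  refine (div_self hL ▸ hmain.div_const _).congr fun ρ => ?_
  rw [div_div_eq_mul_div (A ρ), mul_comm (A ρ)]

/-- `lim_{ρ→c⁺} r(ρ) A(ρ) = 2(c − 3m)/(3 r'(c))`; consequently for `c ≠ 3m`,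
`A(ρ)` is asymptotic to `(2(c−3m)/(3 r'(c))) / r(ρ)` as `ρ → c⁺`. -/
theorem stmt3 (c m : ℝ) (hc : 0 < c)
    (r r' : ℝ → ℝ)
    (hr : ∀ ρ ∈ Set.Ici c, HasDerivWithinAt r (r' ρ) (Set.Ici c) ρ)
    (hr' : ContinuousOn r' (Set.Ici c))
    (hr'gt : ∀ ρ ∈ Set.Ici c, 1 < r' ρ)
    (hrc : r c = 0)
    (hrpos : ∀ ρ ∈ Set.Ioi c, 0 < r ρ)
    (hrinf : Tendsto (fun ρ => r ρ / ρ) atTop (nhds 1))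
    (hint : ∀ ρ ∈ Set.Ioi c,
      IntegrableOn (fun z => (z - 3 * m) / r z ^ 4) (Set.Ioi ρ))
    (A : ℝ → ℝ)
    (hA : ∀ ρ ∈ Set.Ioi c,
      A ρ = 2 * r ρ ^ 2 * ∫ z in Set.Ioi ρ, (z - 3 * m) / r z ^ 4) :
    Tendsto (fun ρ => r ρ * A ρ) (nhdsWithin c (Set.Ioi c))
      (nhds (2 * (c - 3 * m) / (3 * r' c))) ∧
    (c ≠ 3 * m →
      Tendsto (fun ρ => A ρ / ((2 * (c - 3 * m) / (3 * r' c)) / r ρ))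
        (nhdsWithin c (Set.Ioi c)) (nhds 1)) :=
  stmt3_general c m r r' hr hr'gt hrc hint A hA
end

section
/- If c < 3m, then A has exactly one zero ρ_h in (c, ∞), and this zero satisfies c < ρ_h < 3m. Moreover A is negative on (c, ρ_h) and positive on (ρ_h, ∞). -/
open MeasureTheory Filter

/-- If `c < 3m`, then `A` has a unique zero `ρ_h`, with `c < ρ_h < 3m`,
`A < 0` on `(c, ρ_h)` and `A > 0` on `(ρ_h, ∞)`. -/
theorem stmt4 (c m : ℝ) (hc : 0 < c) (hcm : c < 3 * m)
    (r r' : ℝ → ℝ)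
    (hr : ∀ ρ ∈ Set.Ici c, HasDerivWithinAt r (r' ρ) (Set.Ici c) ρ)
    (hr' : ContinuousOn r' (Set.Ici c))
    (hr'gt : ∀ ρ ∈ Set.Ici c, 1 < r' ρ)
    (hrc : r c = 0)
    (hrpos : ∀ ρ ∈ Set.Ioi c, 0 < r ρ)
    (hrinf : Tendsto (fun ρ => r ρ / ρ) atTop (nhds 1))
    (hint : ∀ ρ ∈ Set.Ioi c,
      IntegrableOn (fun z => (z - 3 * m) / r z ^ 4) (Set.Ioi ρ))
    (A : ℝ → ℝ)
    (hA : ∀ ρ ∈ Set.Ioi c,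
      A ρ = 2 * r ρ ^ 2 * ∫ z in Set.Ioi ρ, (z - 3 * m) / r z ^ 4)
    (hAc : Tendsto A (nhdsWithin c (Set.Ioi c)) atBot)
    (hAinf : Tendsto A atTop (nhds 1)) :
    ∃! ρh : ℝ, ρh ∈ Set.Ioi c ∧ A ρh = 0 ∧ c < ρh ∧ ρh < 3 * m ∧
      (∀ ρ, c < ρ → ρ < ρh → A ρ < 0) ∧ (∀ ρ, ρh < ρ → 0 < A ρ) := by
  set f : ℝ → ℝ := fun z => (z - 3 * m) / r z ^ 4 with hfdef
  set B : ℝ → ℝ := fun ρ => ∫ z in Set.Ioi ρ, f z with hBdef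
  have hrpow : ∀ z, c < z → 0 < r z ^ 4 := fun z hz => pow_pos (hrpos z hz) 4
  -- interval integrability
  have hii : ∀ a b : ℝ, c < a → a ≤ b → IntervalIntegrable f volume a b := by
    intro a b ha hab
    exact (intervalIntegrable_iff_integrableOn_Ioc_of_le hab).mpr
      ((hint a ha).mono_set Set.Ioc_subset_Ioi_self)
  -- splitting lemma
  have hsplit : ∀ a b : ℝ, c < a → a ≤ b → B a = (∫ z in a..b, f z) + B b := by
    intro a b ha hab
    have hia : IntegrableOn f (Set.Ioi a) := hint a ha
    have h1 : IntegrableOn f (Set.Ioc a b) := hia.mono_set Set.Ioc_subset_Ioi_self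
    have h2 : IntegrableOn f (Set.Ioi b) := hia.mono_set (Set.Ioi_subset_Ioi hab)
    have hu : Set.Ioc a b ∪ Set.Ioi b = Set.Ioi a := Set.Ioc_union_Ioi_eq_Ioi hab
    rw [intervalIntegral.integral_of_le hab]
    simp only [hBdef]
    rw [← hu, MeasureTheory.setIntegral_union Set.Ioc_disjoint_Ioi_same
      measurableSet_Ioi h1 h2]
  -- strict monotonicity on (c, 3m]
  have hmono : ∀ a b : ℝ, c < a → a < b → b ≤ 3 * m → B a < B b := by
    intro a b ha hab hb3
    have hs := hsplit a b ha hab.le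
    have hneg : (∫ z in a..b, f z) < 0 := by
      have hpos : 0 < ∫ z in a..b, -f z := by
        apply intervalIntegral.intervalIntegral_pos_of_pos_on ((hii a b ha hab.le).neg)
        · intro x hx
          have hxc : c < x := lt_trans ha hx.1
          have : f x < 0 :=
            div_neg_of_neg_of_pos (by linarith [hx.2]) (hrpow x hxc)
          simp only [Pi.neg_apply]
          linarith
        · exact hab
      rw [intervalIntegral.integral_neg] at hpos
      linarith
    linarith
  -- B positive on [3m, ∞)
  have hBpos : ∀ b : ℝ, 3 * m ≤ b → 0 < B b := by
    intro b hb
    have hbc : c < b := lt_of_lt_of_le hcm hb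
    have hi : IntegrableOn f (Set.Ioi b) := hint b hbc
    have hfpos : ∀ z ∈ Set.Ioi b, 0 < f z := by
      intro z hz
      exact div_pos (by simp only [Set.mem_Ioi] at hz; linarith)
        (hrpow z (lt_trans hbc hz))
    have hae : 0 ≤ᵐ[volume.restrict (Set.Ioi b)] f :=
      MeasureTheory.ae_restrict_of_forall_mem measurableSet_Ioi
        (fun z hz => (hfpos z hz).le)
    refine (MeasureTheory.setIntegral_pos_iff_support_of_nonneg_ae hae hi).mpr ?_
    have hsub : Set.Ioi b ⊆ Function.support f ∩ Set.Ioi b :=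
      fun z hz => ⟨Function.mem_support.mpr (hfpos z hz).ne', hz⟩
    calc (0 : ENNReal) < volume (Set.Ioi b) := by simp [Real.volume_Ioi]
      _ ≤ volume (Function.support f ∩ Set.Ioi b) := measure_mono hsub
  -- relation A = 2 r^2 B
  have hAB : ∀ ρ, c < ρ → A ρ = 2 * r ρ ^ 2 * B ρ := fun ρ hρ => hA ρ hρ
  have h2r : ∀ ρ, c < ρ → 0 < 2 * r ρ ^ 2 :=
    fun ρ hρ => by have := hrpos ρ hρ; positivity
  -- find a₀ with c < a₀ < 3m and B a₀ < 0
  have hev : ∀ᶠ ρ in nhdsWithin c (Set.Ioi c), A ρ < 0 ∧ ρ < 3 * m := by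
    filter_upwards [hAc.eventually (eventually_lt_atBot 0),
      eventually_nhdsWithin_of_eventually_nhds (eventually_lt_nhds hcm)] with ρ h1 h2
    exact ⟨h1, h2⟩
  obtain ⟨a₀, ⟨hAa₀, ha₀3⟩, ha₀c⟩ :=
    (hev.and self_mem_nhdsWithin).exists
  have hBa₀ : B a₀ < 0 := by
    by_contra h
    push_neg at h
    have := mul_nonneg (h2r a₀ ha₀c).le h
    rw [← hAB a₀ ha₀c] at this
    linarith
  -- continuity of B on [a₀, 3m]
  have hcontB : ContinuousOn B (Set.Icc a₀ (3 * m)) := by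
    have hiiab : IntervalIntegrable f volume a₀ (3 * m) := hii a₀ (3 * m) ha₀c ha₀3.le
    have hprim : ContinuousOn (fun x => ∫ t in a₀..x, f t) (Set.uIcc a₀ (3 * m)) :=
      intervalIntegral.continuousOn_primitive_interval' hiiab Set.left_mem_uIcc
    rw [Set.uIcc_of_le ha₀3.le] at hprim
    have : ContinuousOn (fun x => B a₀ - ∫ t in a₀..x, f t) (Set.Icc a₀ (3 * m)) :=
      continuousOn_const.sub hprim
    apply this.congr
    intro x hx
    have := hsplit a₀ x ha₀c hx.1
    show B x = B a₀ - ∫ t in a₀..x, f t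
    linarith
  -- IVT
  have hB3m : 0 < B (3 * m) := hBpos (3 * m) le_rfl
  have h0mem : (0 : ℝ) ∈ Set.Icc (B a₀) (B (3 * m)) := ⟨hBa₀.le, hB3m.le⟩
  obtain ⟨ρh, hρhmem, hBρh⟩ := intermediate_value_Icc ha₀3.le hcontB h0mem
  have hρhc : c < ρh := lt_of_lt_of_le ha₀c hρhmem.1
  have hρh3 : ρh < 3 * m := lt_of_le_of_ne hρhmem.2 (by
    intro h; rw [h] at hBρh; linarith)
  -- sign of A left and right
  have hAneg : ∀ ρ, c < ρ → ρ < ρh → A ρ < 0 := by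
    intro ρ hρ hρρh
    have : B ρ < 0 := by
      have := hmono ρ ρh hρ hρρh hρh3.le
      linarith
    rw [hAB ρ hρ]
    exact mul_neg_of_pos_of_neg (h2r ρ hρ) this
  have hApos : ∀ ρ, ρh < ρ → 0 < A ρ := by
    intro ρ hρρh
    have hρc : c < ρ := lt_trans hρhc hρρh
    have hBρ : 0 < B ρ := by
      rcases le_or_gt ρ (3 * m) with h | h
      · have := hmono ρh ρ hρhc hρρh h
        linarith
      · exact hBpos ρ h.le
    rw [hAB ρ hρc]
    exact mul_pos (h2r ρ hρc) hBρ
  have hAρh : A ρh = 0 := by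
    rw [hAB ρh hρhc, hBρh, mul_zero]
  refine ⟨ρh, ⟨hρhc, hAρh, hρhc, hρh3, hAneg, hApos⟩, ?_⟩
  rintro y ⟨hy1, hy2, -⟩
  rcases lt_trichotomy y ρh with h | h | h
  · exact absurd hy2 (hAneg y hy1 h).ne
  · exact h
  · exact absurd hy2.symm (hApos y h).ne
end

section
/- Assume c = 3m and that lim_{ρ→c⁺} A'(ρ) exists and is finite. Then A'(c) := lim_{ρ→c⁺} A'(ρ) = −3 r''(c)/r'(c)^3. -/
/-!
Put `B = r'² A - 1`, which tends to `0` at `c⁺`. By l'Hôpital, `B / (ρ - c)` tends to the limit of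
`B' = 2 r' r'' A + r'² A'`, namely `2 r''(c) / r'(c) + r'(c)² L`. On the other hand, solving the
field equation for `A` expresses `B / (ρ - c)` through the difference quotient `r / (ρ - c) → r'(c)`
and the second-order Taylor quotient `(r' (ρ - c) - r) / (ρ - c)² → r''(c) / 2`, which gives the
limit `r'(c)² L / 2 + r''(c) / (2 r'(c))`. Equating the two limits determines `L`.
-/

open Filter Set Topology

section OneSidedLimits

variable {f f' f'' : ℝ → ℝ} {a b l l' : ℝ}

theorem tendsto_div_sub_nhdsGT_of_hasDerivAt (hab : a < b)
    (hf : ∀ x ∈ Ioo a b, HasDerivAt f (f' x) x) (hfa : Tendsto f (𝓝[>] a) (𝓝 0))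
    (hf'a : Tendsto f' (𝓝[>] a) (𝓝 l)) :
    Tendsto (fun x => f x / (x - a)) (𝓝[>] a) (𝓝 l) := by
  refine HasDerivAt.lhopital_zero_right_on_Ioo hab hf (fun x _ => (hasDerivAt_id x).sub_const a)
    (fun _ _ => one_ne_zero) hfa ?_ (by simpa using hf'a)
  exact tendsto_sub_nhds_zero_iff.mpr (tendsto_id.mono_left nhdsWithin_le_nhds)

theorem tendsto_taylor_remainder_div_sq_nhdsGT (hab : a < b)
    (hf : ∀ x ∈ Ioo a b, HasDerivAt f (f' x) x) (hf' : ∀ x ∈ Ioo a b, HasDerivAt f' (f'' x) x)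
    (hfa : Tendsto f (𝓝[>] a) (𝓝 (f a))) (hf'a : Tendsto f' (𝓝[>] a) (𝓝 l'))
    (hf''a : Tendsto f'' (𝓝[>] a) (𝓝 l)) :
    Tendsto (fun x => (f' x * (x - a) - (f x - f a)) / (x - a) ^ 2) (𝓝[>] a) (𝓝 (l / 2)) := by
  have hid : Tendsto (fun x : ℝ => x - a) (𝓝[>] a) (𝓝 0) :=
    tendsto_sub_nhds_zero_iff.mpr (tendsto_id.mono_left nhdsWithin_le_nhds)
  refine HasDerivAt.lhopital_zero_right_on_Ioo hab (f' := fun x => f'' x * (x - a))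
    (g' := fun x => 2 * (x - a)) (fun x hx => ?_) (fun x _ => ?_) (fun x hx => ?_) ?_ ?_ ?_
  · exact ((hf' x hx).mul ((hasDerivAt_id x).sub_const a)).sub ((hf x hx).sub_const (f a))
      |>.congr_deriv (by simp)
  · simpa using ((hasDerivAt_id x).sub_const a).fun_pow 2
  · linarith [hx.1]
  · simpa using (hf'a.mul hid).sub (hfa.sub_const (f a))
  · simpa using hid.pow 2
  · refine (hf''a.div_const 2).congr' ?_
    filter_upwards [self_mem_nhdsWithin] with x hx
    have : x - a ≠ 0 := sub_ne_zero.mpr (ne_of_gt hx)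
    field_simp

end OneSidedLimits

theorem sq_mul_sub_one_div_eq_of_field_eq {c ρ r r' A A' : ℝ} (hρ : ρ ≠ c) (hr : r ≠ 0)
    (h : r ^ 2 * A' - 2 * r * r' * A = 2 * (c - ρ)) :
    (r' ^ 2 * A - 1) / (ρ - c) =
      r' * (r / (ρ - c)) * A' / 2 + (r' * (ρ - c) - r) / (ρ - c) ^ 2 / (r / (ρ - c)) := by
  have : ρ - c ≠ 0 := sub_ne_zero.mpr hρ
  field_simp
  linear_combination (-r') * h

theorem stmt6_general (c : ℝ)
    (r r' r'' : ℝ → ℝ)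
    (hr : ∀ ρ ∈ Set.Ici c, HasDerivWithinAt r (r' ρ) (Set.Ici c) ρ)
    (hr'd : ∀ ρ ∈ Set.Ici c, HasDerivWithinAt r' (r'' ρ) (Set.Ici c) ρ)
    (hr'' : ContinuousOn r'' (Set.Ici c))
    (hr'gt : ∀ ρ ∈ Set.Ici c, 1 < r' ρ)
    (hrc : r c = 0)
    (hrpos : ∀ ρ ∈ Set.Ioi c, 0 < r ρ)
    (A A' : ℝ → ℝ)
    (hA : ∀ ρ ∈ Set.Ioi c, HasDerivAt A (A' ρ) ρ)
    (hode : ∀ ρ ∈ Set.Ioi c,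
      r ρ ^ 2 * A' ρ - 2 * r ρ * r' ρ * A ρ = 2 * (c - ρ))
    (hAc : Tendsto A (nhdsWithin c (Set.Ioi c)) (nhds (1 / r' c ^ 2)))
    (L : ℝ)
    (hL : Tendsto A' (nhdsWithin c (Set.Ioi c)) (nhds L)) :
    L = -3 * r'' c / r' c ^ 3 := by
  have hr'c : r' c ≠ 0 := by linarith [hr'gt c self_mem_Ici]
  have hc : c < c + 1 := lt_add_one c
  have hrD x (hx : x ∈ Ioo c (c + 1)) : HasDerivAt r (r' x) x :=
    (hr x (le_of_lt hx.1)).hasDerivAt (Ici_mem_nhds hx.1)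
  have hr'D x (hx : x ∈ Ioo c (c + 1)) : HasDerivAt r' (r'' x) x :=
    (hr'd x (le_of_lt hx.1)).hasDerivAt (Ici_mem_nhds hx.1)
  have hr_lim := ((hr c self_mem_Ici).continuousWithinAt.mono Ioi_subset_Ici_self).tendsto
  have hr'_lim := ((hr'd c self_mem_Ici).continuousWithinAt.mono Ioi_subset_Ici_self).tendsto
  have hr''_lim := ((hr''.continuousWithinAt self_mem_Ici).mono Ioi_subset_Ici_self).tendsto
  have hslope := tendsto_div_sub_nhdsGT_of_hasDerivAt hc hrD (hrc ▸ hr_lim) hr'_lim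
  have htaylor := tendsto_taylor_remainder_div_sq_nhdsGT hc hrD hr'D hr_lim hr'_lim hr''_lim
  simp only [hrc, sub_zero] at htaylor
  have hB_lhopital : Tendsto (fun ρ => (r' ρ ^ 2 * A ρ - 1) / (ρ - c)) (𝓝[>] c)
      (𝓝 (2 * r' c * r'' c * (1 / r' c ^ 2) + r' c ^ 2 * L)) := by
    refine tendsto_div_sub_nhdsGT_of_hasDerivAt hc (fun x hx => ?_) ?_
      ((((tendsto_const_nhds.mul hr'_lim).mul hr''_lim).mul hAc).add ((hr'_lim.pow 2).mul hL))
    · exact ((((hr'D x hx).fun_pow 2).mul (hA x hx.1)).sub_const 1).congr_deriv (by push_cast; ring)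
    · simpa [hr'c] using ((hr'_lim.pow 2).mul hAc).sub_const 1
  have hB_field : Tendsto (fun ρ => (r' ρ ^ 2 * A ρ - 1) / (ρ - c)) (𝓝[>] c)
      (𝓝 (r' c * r' c * L / 2 + r'' c / 2 / r' c)) := by
    refine ((((hr'_lim.mul hslope).mul hL).div_const 2).add (htaylor.div hslope hr'c)).congr' ?_
    filter_upwards [self_mem_nhdsWithin] with ρ hρ
    exact (sq_mul_sub_one_div_eq_of_field_eq (ne_of_gt hρ) (hrpos ρ hρ).ne' (hode ρ hρ)).symm
  have key := tendsto_nhds_unique hB_lhopital hB_field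
  field_simp at key ⊢
  linear_combination key

/-- If `c = 3m` and `lim_{ρ→c⁺} A'` exists and is finite, then
`A'(c) = −3 r''(c)/r'(c)³`. -/
theorem stmt6 (c m : ℝ) (hc : 0 < c) (hm : m = c / 3)
    (r r' r'' : ℝ → ℝ)
    (hr : ∀ ρ ∈ Set.Ici c, HasDerivWithinAt r (r' ρ) (Set.Ici c) ρ)
    (hr'd : ∀ ρ ∈ Set.Ici c, HasDerivWithinAt r' (r'' ρ) (Set.Ici c) ρ)
    (hr'' : ContinuousOn r'' (Set.Ici c))
    (hr'gt : ∀ ρ ∈ Set.Ici c, 1 < r' ρ)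
    (hrc : r c = 0)
    (hrpos : ∀ ρ ∈ Set.Ioi c, 0 < r ρ)
    (A A' : ℝ → ℝ)
    (hA : ∀ ρ ∈ Set.Ioi c, HasDerivAt A (A' ρ) ρ)
    (hode : ∀ ρ ∈ Set.Ioi c,
      r ρ ^ 2 * A' ρ - 2 * r ρ * r' ρ * A ρ = 2 * (c - ρ))
    (hAc : Tendsto A (nhdsWithin c (Set.Ioi c)) (nhds (1 / r' c ^ 2)))
    (L : ℝ)
    (hL : Tendsto A' (nhdsWithin c (Set.Ioi c)) (nhds L)) :
    L = -3 * r'' c / r' c ^ 3 :=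
  stmt6_general c r r' r'' hr hr'd hr'' hr'gt hrc hrpos A A' hA hode hAc L hL
end

section
/- Convergence of the scalar field at infinity: if r(ρ) = ρ − s(ρ) with 0 ≤ s(ρ) ≤ a^2/ρ^n and |s''(ρ)| ≤ C/ρ^{n+2} for large ρ (n > 0), then the improper integral ∫_{ρ₀}^∞ sqrt(−2 r''(z)/r(z)) dz converges, so φ(ρ) = φ(ρ₀) − ∫_{ρ₀}^ρ sqrt(−2 r''(z)/r(z)) dz has a finite limit as ρ → ∞. -/
open MeasureTheory Filter

/-- Convergence of the scalar field at infinity: if `r(ρ) = ρ − s(ρ)` with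
`0 ≤ s ≤ a²/ρⁿ` and `−C/ρ^(n+2) ≤ r'' ≤ 0`, then `∫_{ρ₀}^∞ √(−2r''/r)` converges,
so `φ(ρ) = φ(ρ₀) − ∫_{ρ₀}^ρ √(−2r''/r)` has a finite limit as `ρ → ∞`. -/
theorem stmt12 (ρ₀ n a C : ℝ) (hρ₀ : 0 < ρ₀) (hn : 0 < n) (ha : 0 < a) (hC : 0 < C)
    (r r' r'' : ℝ → ℝ)
    (hr : ∀ ρ ∈ Set.Ici ρ₀, HasDerivWithinAt r (r' ρ) (Set.Ici ρ₀) ρ)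
    (hr'd : ∀ ρ ∈ Set.Ici ρ₀, HasDerivWithinAt r' (r'' ρ) (Set.Ici ρ₀) ρ)
    (hr''cont : ContinuousOn r'' (Set.Ici ρ₀))
    (hrpos : ∀ ρ ∈ Set.Ici ρ₀, 0 < r ρ)
    (hs : ∀ ρ ∈ Set.Ici ρ₀, 0 ≤ ρ - r ρ ∧ ρ - r ρ ≤ a ^ 2 / ρ ^ n)
    (hr'' : ∀ ρ ∈ Set.Ici ρ₀, -C / ρ ^ (n + 2) ≤ r'' ρ ∧ r'' ρ ≤ 0)
    (φ₀ : ℝ) :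
    IntegrableOn (fun z => Real.sqrt (-2 * r'' z / r z)) (Set.Ioi ρ₀) ∧
    ∃ L : ℝ, Tendsto
      (fun ρ => φ₀ - ∫ z in ρ₀..ρ, Real.sqrt (-2 * r'' z / r z))
      atTop (nhds L) := by
  set f : ℝ → ℝ := fun z => Real.sqrt (-2 * r'' z / r z) with hf
  have hrcont : ContinuousOn r (Set.Ici ρ₀) := fun x hx => (hr x hx).continuousWithinAt
  have hfcont : ContinuousOn f (Set.Ici ρ₀) := by
    apply Real.continuous_sqrt.comp_continuousOn
    exact ((hr''cont.const_smul (-2 : ℝ)).div hrcont (fun x hx => (hrpos x hx).ne'))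
  set K : ℝ := a ^ 2 / ρ₀ ^ n with hK
  have hρ₀n : (0 : ℝ) < ρ₀ ^ n := Real.rpow_pos_of_pos hρ₀ n
  have hKpos : 0 < K := div_pos (pow_pos ha 2) hρ₀n
  set M : ℝ := max ρ₀ (2 * K) with hM
  have hρ₀M : ρ₀ ≤ M := le_max_left _ _
  have hM0 : 0 < M := lt_of_lt_of_le hρ₀ hρ₀M
  -- lower bound on r in the tail
  have hrM : ∀ z ∈ Set.Ioi M, z / 2 ≤ r z := by
    intro z hz
    have hzM : M < z := hz
    have hzρ : ρ₀ ≤ z := le_trans hρ₀M hzM.le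
    have hz0 : 0 < z := lt_trans hρ₀ (lt_of_le_of_lt hρ₀M hzM)
    have hsz := (hs z hzρ).2
    have hpow : ρ₀ ^ n ≤ z ^ n := Real.rpow_le_rpow hρ₀.le hzρ hn.le
    have h1 : a ^ 2 / z ^ n ≤ K := by
      apply div_le_div_of_nonneg_left (by positivity) hρ₀n hpow
    have h2 : z - r z ≤ K := le_trans hsz h1
    have h3 : 2 * K ≤ z := le_trans (le_max_right _ _) hzM.le
    linarith
  -- the tail bound function
  set e : ℝ := -(n + 3) / 2 with he
  have he1 : e < -1 := by rw [he]; nlinarith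
  set g : ℝ → ℝ := fun z => 2 * Real.sqrt C * z ^ e with hg
  have hbound : ∀ z ∈ Set.Ioi M, ‖f z‖ ≤ g z := by
    intro z hz
    have hzM : M < z := hz
    have hzρ : ρ₀ ≤ z := le_trans hρ₀M hzM.le
    have hz0 : 0 < z := lt_trans hM0 hzM
    have hrz : 0 < r z := hrpos z hzρ
    have hrz2 : z / 2 ≤ r z := hrM z hz
    have hz2 : (0:ℝ) < z / 2 := by linarith
    have hnum : -2 * r'' z ≤ 2 * C / z ^ (n + 2) := by
      have := (hr'' z hzρ).1
      have hp : (0:ℝ) < z ^ (n + 2) := Real.rpow_pos_of_pos hz0 _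
      rw [div_le_iff₀ hp] at this
      rw [le_div_iff₀ hp]
      nlinarith [this]
    have hnum0 : (0:ℝ) ≤ -2 * r'' z := by nlinarith [(hr'' z hzρ).2]
    have hcnn : (0:ℝ) ≤ 2 * C / z ^ (n + 2) := by positivity
    have hdiv : -2 * r'' z / r z ≤ (2 * C / z ^ (n + 2)) / (z / 2) :=
      div_le_div₀ hcnn hnum hz2 hrz2
    have hp2 : (0:ℝ) < z ^ (n + 2) := Real.rpow_pos_of_pos hz0 _
    have hp3 : z ^ (n + 3) = z ^ (n + 2) * z := by
      rw [show (n + 3 : ℝ) = (n + 2) + 1 by ring, Real.rpow_add hz0, Real.rpow_one]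
    have hdiv2 : (2 * C / z ^ (n + 2)) / (z / 2) = 4 * C / z ^ (n + 3) := by
      rw [hp3]; field_simp; ring
    have hsq : 4 * C / z ^ (n + 3) = (g z) ^ 2 := by
      rw [hg]
      have : (z ^ e) ^ 2 = z ^ (e * 2) := by
        rw [← Real.rpow_natCast (z ^ e) 2, ← Real.rpow_mul hz0.le]
        norm_num
      rw [mul_pow, mul_pow, this, Real.sq_sqrt hC.le]
      rw [show e * 2 = -(n + 3) by rw [he]; ring, Real.rpow_neg hz0.le]
      rw [div_eq_mul_inv]; ring
    have hgnn : 0 ≤ g z := by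
      rw [hg]; positivity
    have : f z ≤ g z := by
      rw [hf]
      calc Real.sqrt (-2 * r'' z / r z) ≤ Real.sqrt ((g z) ^ 2) := by
            apply Real.sqrt_le_sqrt; rw [← hsq, ← hdiv2]; exact hdiv
        _ = g z := Real.sqrt_sq hgnn
    rwa [Real.norm_of_nonneg (Real.sqrt_nonneg _)]
  have hgint : IntegrableOn g (Set.Ioi M) := by
    exact (integrableOn_Ioi_rpow_of_lt he1 hM0).const_mul _
  have hint : IntegrableOn f (Set.Ioi ρ₀) := by
    rw [show Set.Ioi ρ₀ = Set.Ioc ρ₀ M ∪ Set.Ioi M from (Set.Ioc_union_Ioi_eq_Ioi hρ₀M).symm]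
    apply MeasureTheory.IntegrableOn.union
    · exact ((hfcont.mono (Set.Icc_subset_Ici_self)).integrableOn_compact
        isCompact_Icc).mono_set Set.Ioc_subset_Icc_self
    · apply MeasureTheory.Integrable.mono' hgint
      · exact ((hfcont.mono (fun x hx => le_trans hρ₀M (le_of_lt hx))).aestronglyMeasurable
          measurableSet_Ioi)
      · filter_upwards [MeasureTheory.ae_restrict_mem measurableSet_Ioi] with z hz
        exact hbound z hz
  refine ⟨hint, ⟨φ₀ - ∫ z in Set.Ioi ρ₀, f z, ?_⟩⟩
  exact tendsto_const_nhds.sub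
    (MeasureTheory.intervalIntegral_tendsto_integral_Ioi ρ₀ hint tendsto_id)
end

section
/- Weak energy condition at points where V ≥ 0: with the same diagonal stress tensor and a timelike vector u^μ = N(e₀^μ + s₁ e₁^μ + s₂ e₂^μ + s₃ e₃^μ) with N = 1/√(ε(1−s₁²) − s₂² − s₃²) real, one has T^μ_ν u_μ u^ν = N²{[ε(1−s₁²)−s₂²−s₃²] V + [1 + s₁² − ε s₂² − ε s₃²] |A| φ'²/2}, and this quantity is nonnegative whenever V ≥ 0. -/
/-- Weak energy condition where `V ≥ 0`: for a timelike vector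
`u = N(e₀ + s₁e₁ + s₂e₂ + s₃e₃)` with `N = 1/√(ε(1−s₁²)−s₂²−s₃²)`,
`T^μ_ν u_μ u^ν = N²{[ε(1−s₁²)−s₂²−s₃²] V + [1+s₁²−εs₂²−εs₃²] |A| φ'²/2}`,
and this is nonnegative whenever `V ≥ 0`. -/
theorem stmt14 (ε s₁ s₂ s₃ A V φ' N : ℝ)
    (hε : ε = 1 ∨ ε = -1)
    (hεA : ε * A = |A|)
    (htime : 0 < ε * (1 - s₁ ^ 2) - s₂ ^ 2 - s₃ ^ 2)
    (hN : N = 1 / Real.sqrt (ε * (1 - s₁ ^ 2) - s₂ ^ 2 - s₃ ^ 2))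
    (Ttt Tρρ Tuu : ℝ)
    (hTtt : Ttt = V + A * φ' ^ 2 / 2)
    (hTρρ : Tρρ = V - A * φ' ^ 2 / 2)
    (hTuu : Tuu = N ^ 2 * ((ε - s₂ ^ 2 - s₃ ^ 2) * Ttt - ε * s₁ ^ 2 * Tρρ)) :
    Tuu = N ^ 2 * ((ε * (1 - s₁ ^ 2) - s₂ ^ 2 - s₃ ^ 2) * V
        + (1 + s₁ ^ 2 - ε * s₂ ^ 2 - ε * s₃ ^ 2) * |A| * φ' ^ 2 / 2) ∧
    (ε = 1 → 2 * s₁ ^ 2 < 1 + s₁ ^ 2 - ε * s₂ ^ 2 - ε * s₃ ^ 2) ∧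
    (ε = -1 → s₁ ^ 2 + 1 ≤ 1 + s₁ ^ 2 - ε * s₂ ^ 2 - ε * s₃ ^ 2) ∧
    (0 ≤ V → 0 ≤ Tuu) := by
  have hε2 : ε ^ 2 = 1 := by rcases hε with h | h <;> simp [h]
  have key : Tuu = N ^ 2 * ((ε * (1 - s₁ ^ 2) - s₂ ^ 2 - s₃ ^ 2) * V
      + (1 + s₁ ^ 2 - ε * s₂ ^ 2 - ε * s₃ ^ 2) * |A| * φ' ^ 2 / 2) := by
    rw [← hεA] at *
    subst hTtt hTρρ hTuu
    linear_combination N ^ 2 * A * φ' ^ 2 / 2 * (s₂ ^ 2 + s₃ ^ 2) * hε2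
  have hcoef : 0 ≤ 1 + s₁ ^ 2 - ε * s₂ ^ 2 - ε * s₃ ^ 2 := by
    rcases hε with h | h <;> subst h <;> nlinarith
  refine ⟨key, ?_, ?_, ?_⟩
  · intro h; subst h; nlinarith
  · intro h; subst h; nlinarith
  · intro hV
    rw [key]
    have : 0 ≤ |A| := abs_nonneg A
    positivity
end

section
/- Closed-form metric function for r(ρ) = ρ − c²/ρ: the function A(ρ) = 1 − 3mρ/(8c²) − 11m/(8ρ) − (c²/(3ρ²))·(c² − 3mρ)/(c² − ρ²) + 3m(c² − ρ²)² ln((ρ+c)/(ρ−c))/(16 c³ ρ²) satisfies the once-integrated field equation r² A' − (r²)' A = 6m − 2ρ on (c,∞), and A(ρ) → 1 as ρ → ∞. -/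
/-!
The field equation is a rational identity in `ρ`, `c`, `m` and `L = log ((ρ + c) / (ρ - c))`
once one knows `L' = -2c / (ρ² - c²)`.

At infinity the terms `-3mρ/(8c²)` and `3m(c² - ρ²)² L / (16c³ρ²)` both grow linearly; they
cancel because `L = 2c/ρ + O(ρ⁻³)`, which is the third-order Taylor bound for
`log (1 + t) - log (1 - t)` at `t = c/ρ`.
-/

open Filter Real Topology

noncomputable def metricFunction (c m ρ : ℝ) : ℝ :=
  1 - 3 * m * ρ / (8 * c ^ 2) - 11 * m / (8 * ρ)
    - (c ^ 2 / (3 * ρ ^ 2)) * ((c ^ 2 - 3 * m * ρ) / (c ^ 2 - ρ ^ 2))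
    + 3 * m * (c ^ 2 - ρ ^ 2) ^ 2 * log ((ρ + c) / (ρ - c)) / (16 * c ^ 3 * ρ ^ 2)

theorem hasDerivAt_log_div_add_sub {c ρ : ℝ} (h₁ : ρ + c ≠ 0) (h₂ : ρ - c ≠ 0) :
    HasDerivAt (fun x => log ((x + c) / (x - c))) (-2 * c / ((ρ + c) * (ρ - c))) ρ := by
  convert (((hasDerivAt_id' ρ).add_const c).fun_div ((hasDerivAt_id' ρ).sub_const c) h₂).log
    (div_ne_zero h₁ h₂) using 1
  field_simp
  ring

theorem abs_log_one_add_sub_log_one_sub_sub_le {t : ℝ} (ht : |t| < 1) :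
    |log (1 + t) - log (1 - t) - 2 * t| ≤ 2 * |t| ^ 3 / (1 - |t|) := by
  have h₁ := abs_log_sub_add_sum_range_le ht 2
  have h₂ := abs_log_sub_add_sum_range_le (x := -t) (by rwa [abs_neg]) 2
  rw [abs_neg, sub_neg_eq_add] at h₂
  norm_num [Finset.sum_range_succ] at h₁ h₂
  calc |log (1 + t) - log (1 - t) - 2 * t|
      = |(-t + t ^ 2 / 2 + log (1 + t)) - (t + t ^ 2 / 2 + log (1 - t))| := by ring_nf
    _ ≤ |-t + t ^ 2 / 2 + log (1 + t)| + |t + t ^ 2 / 2 + log (1 - t)| := abs_sub _ _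
    _ ≤ |t| ^ 3 / (1 - |t|) + |t| ^ 3 / (1 - |t|) := add_le_add h₂ h₁
    _ = 2 * |t| ^ 3 / (1 - |t|) := by ring

theorem tendsto_sq_mul_log_div_add_sub_sub_atTop (c : ℝ) :
    Tendsto (fun ρ => ρ ^ 2 * log ((ρ + c) / (ρ - c)) - 2 * c * ρ) atTop (𝓝 0) := by
  have hbound : Tendsto (fun ρ => 2 * |c| ^ 3 / (ρ - |c|)) atTop (𝓝 0) :=
    tendsto_const_nhds.div_atTop (tendsto_atTop_add_const_right _ (-|c|) tendsto_id)
  refine squeeze_zero_norm' ?_ hbound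
  filter_upwards [eventually_gt_atTop |c|] with ρ hρc
  have hρ : 0 < ρ := (abs_nonneg c).trans_lt hρc
  have ht : |c / ρ| < 1 := by rwa [abs_div, abs_of_pos hρ, div_lt_one hρ]
  have hlog : log ((ρ + c) / (ρ - c)) = log (1 + c / ρ) - log (1 - c / ρ) := by
    obtain ⟨ht₁, ht₂⟩ := abs_lt.1 ht
    rw [← log_div (by linarith) (by linarith)]
    congr 1
    field_simp
  calc ‖ρ ^ 2 * log ((ρ + c) / (ρ - c)) - 2 * c * ρ‖
      = ρ ^ 2 * |log (1 + c / ρ) - log (1 - c / ρ) - 2 * (c / ρ)| := by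
        rw [hlog, norm_eq_abs, ← abs_of_pos (pow_pos hρ 2), ← abs_mul, abs_of_pos (pow_pos hρ 2)]
        congr 1
        field_simp
    _ ≤ ρ ^ 2 * (2 * |c / ρ| ^ 3 / (1 - |c / ρ|)) := by
        gcongr
        exact abs_log_one_add_sub_log_one_sub_sub_le ht
    _ = 2 * |c| ^ 3 / (ρ - |c|) := by
        rw [abs_div, abs_of_pos hρ]
        field_simp

theorem tendsto_log_div_add_sub_atTop (c : ℝ) :
    Tendsto (fun ρ => log ((ρ + c) / (ρ - c))) atTop (𝓝 0) := by
  have h := ((tendsto_sq_mul_log_div_add_sub_sub_atTop c).div_atTop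
    (tendsto_pow_atTop two_ne_zero)).add ((tendsto_const_nhds (x := 2 * c)).div_atTop tendsto_id)
  rw [add_zero] at h
  refine h.congr' ?_
  filter_upwards [eventually_ne_atTop 0] with ρ hρ
  simp only [id_eq]
  field_simp
  ring

theorem hasDerivAt_metricFunction (m : ℝ) {c ρ : ℝ} (hc : 0 < c) (hρ : c < ρ) :
    HasDerivAt (metricFunction c m)
      (((2 * ρ - 2 * c ^ 4 / ρ ^ 3) * metricFunction c m ρ + 6 * m - 2 * ρ) /
        (ρ - c ^ 2 / ρ) ^ 2) ρ := by
  have hρpos : 0 < ρ := hc.trans hρ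
  have hsum : ρ + c ≠ 0 := by positivity
  have hdiff : ρ - c ≠ 0 := sub_ne_zero.2 hρ.ne'
  have hlt : c ^ 2 < ρ ^ 2 := pow_lt_pow_left₀ hρ hc.le two_ne_zero
  have hsq : c ^ 2 - ρ ^ 2 ≠ 0 := (sub_neg.2 hlt).ne
  have hx := hasDerivAt_id' ρ
  have hx2 := hasDerivAt_pow 2 ρ
  have hlin := (hx.const_mul (3 * m)).div_const (8 * c ^ 2)
  have hinv := (hasDerivAt_const ρ (11 * m)).fun_div (hx.const_mul 8) (by positivity)
  have hrat := ((hasDerivAt_const ρ (c ^ 2)).fun_div (hx2.const_mul 3) (by positivity)).fun_mul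
    (((hasDerivAt_const ρ (c ^ 2)).fun_sub (hx.const_mul (3 * m))).fun_div
      ((hasDerivAt_const ρ (c ^ 2)).fun_sub hx2) hsq)
  have hlog := (((((hasDerivAt_const ρ (c ^ 2)).fun_sub hx2).fun_pow 2).const_mul (3 * m)).fun_mul
    (hasDerivAt_log_div_add_sub hsum hdiff)).fun_div (hx2.const_mul (16 * c ^ 3)) (by positivity)
  have hA : HasDerivAt (metricFunction c m) _ ρ :=
    ((((hasDerivAt_const ρ 1).fun_sub hlin).fun_sub hinv).fun_sub hrat).fun_add hlog
  convert hA using 1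
  unfold metricFunction
  generalize log ((ρ + c) / (ρ - c)) = L
  have hsq' : ρ ^ 2 - c ^ 2 ≠ 0 := (sub_pos.2 hlt).ne'
  field_simp
  ring

theorem tendsto_metricFunction_atTop (m : ℝ) {c : ℝ} (hc : c ≠ 0) :
    Tendsto (metricFunction c m) atTop (𝓝 1) := by
  have hinv : Tendsto (fun ρ : ℝ => ρ⁻¹) atTop (𝓝 0) := tendsto_inv_atTop_zero
  have hrat : Tendsto (fun ρ => (c ^ 2 - 3 * m * ρ) / (c ^ 2 - ρ ^ 2)) atTop (𝓝 0) := by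
    have h := (((hinv.pow 2).const_mul (c ^ 2)).sub (hinv.const_mul (3 * m))).div
      (((hinv.pow 2).const_mul (c ^ 2)).sub_const 1) (by norm_num)
    rw [zero_pow two_ne_zero, mul_zero, mul_zero, sub_zero, zero_div] at h
    refine h.congr' ?_
    filter_upwards [eventually_gt_atTop |c|] with ρ hρ
    have hρ0 : 0 < ρ := (abs_nonneg c).trans_lt hρ
    have hsq : c ^ 2 - ρ ^ 2 ≠ 0 := (sub_neg.2 (sq_lt_sq.2 (by rwa [abs_of_pos hρ0]))).ne
    rw [Pi.div_apply]
    field_simp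
  have h : Tendsto (fun ρ => 1 - 11 * m / 8 * ρ⁻¹ - c ^ 2 / 3 * ρ⁻¹ ^ 2 *
      ((c ^ 2 - 3 * m * ρ) / (c ^ 2 - ρ ^ 2)) + 3 * m / (16 * c ^ 3) *
        ((ρ ^ 2 * log ((ρ + c) / (ρ - c)) - 2 * c * ρ) +
          (c ^ 4 * ρ⁻¹ ^ 2 - 2 * c ^ 2) * log ((ρ + c) / (ρ - c)))) atTop (𝓝 1) := by
    convert ((tendsto_const_nhds.sub (hinv.const_mul _)).sub
      (((hinv.pow 2).const_mul _).mul hrat)).add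
      (((tendsto_sq_mul_log_div_add_sub_sub_atTop c).add
        ((((hinv.pow 2).const_mul _).sub tendsto_const_nhds).mul
          (tendsto_log_div_add_sub_atTop c))).const_mul _) using 2
    simp
  refine h.congr' ?_
  filter_upwards [eventually_ne_atTop 0] with ρ hρ
  unfold metricFunction
  generalize log ((ρ + c) / (ρ - c)) = L
  field_simp
  ring

/-- Closed-form metric function for `r(ρ) = ρ − c²/ρ`: the explicit
`A(ρ) = 1 − 3mρ/(8c²) − 11m/(8ρ) − (c²/(3ρ²))(c²−3mρ)/(c²−ρ²)
      + 3m(c²−ρ²)² ln((ρ+c)/(ρ−c))/(16c³ρ²)`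
satisfies `r² A' − (r²)' A = 6m − 2ρ` on `(c,∞)` and `A → 1` at infinity. -/
theorem stmt18 (c m : ℝ) (hc : 0 < c)
    (r A : ℝ → ℝ)
    (hr : ∀ ρ : ℝ, r ρ = ρ - c ^ 2 / ρ)
    (hA : ∀ ρ : ℝ, A ρ =
      1 - 3 * m * ρ / (8 * c ^ 2) - 11 * m / (8 * ρ)
        - (c ^ 2 / (3 * ρ ^ 2)) * ((c ^ 2 - 3 * m * ρ) / (c ^ 2 - ρ ^ 2))
        + 3 * m * (c ^ 2 - ρ ^ 2) ^ 2 * Real.log ((ρ + c) / (ρ - c))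
            / (16 * c ^ 3 * ρ ^ 2)) :
    (∀ ρ ∈ Set.Ioi c, DifferentiableAt ℝ A ρ ∧
      r ρ ^ 2 * deriv A ρ - (2 * ρ - 2 * c ^ 4 / ρ ^ 3) * A ρ = 6 * m - 2 * ρ) ∧
    Tendsto A atTop (nhds 1) := by
  obtain rfl : A = metricFunction c m := funext hA
  refine ⟨fun ρ (hρ : c < ρ) => ?_, tendsto_metricFunction_atTop m hc.ne'⟩
  have hρ0 : 0 < ρ := hc.trans hρ
  have hr0 : r ρ ≠ 0 := by
    rw [hr, sub_ne_zero, ne_eq, eq_div_iff hρ0.ne']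
    nlinarith
  have hderiv := hasDerivAt_metricFunction m hc hρ
  refine ⟨hderiv.differentiableAt, ?_⟩
  rw [hderiv.deriv, ← hr, mul_div_cancel₀ _ (pow_ne_zero 2 hr0)]
  ring
end

section
/- For r(ρ) = ρ − b²/(4(ρ − b)) with b > 0, the function φ(ρ) = 3π/2 − 4 arctan((√2+1)·sqrt((2ρ − (√2+1)b)/(2ρ + (√2−1)b))) satisfies φ'(ρ) = −sqrt(−2 r''(ρ)/r(ρ)) on (c,∞), where c = (√2+1)b/2 is the unique zero of r in (b,∞), and φ(ρ) → 0 as ρ → ∞. -/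
open Filter Real Set Topology

/-!
Because `(√2 + 1)(√2 - 1) = 1`, the function `r` factors as `r(ρ) = A B / (4(ρ - b))` with
`A = 2ρ - (√2 + 1)b` and `B = 2ρ + (√2 - 1)b`; this gives the zero at `c`, positivity beyond it,
and `-2r''/r = (2b / ((ρ - b)√(AB)))²`. The chain rule gives the same expression for `-φ'` once
one notices `B + (√2 + 1)² A = 4(2 + √2)(ρ - b)`. Finally `A/B → 1`, so
`φ → 3π/2 - 4 arctan (√2 + 1) = 0`, as `tan (3π/8) = √2 + 1`.
-/

lemma two_mul_arctan_sqrt_two_add_one : 2 * arctan (√2 + 1) = 3 * π / 4 := by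
  have hs : √2 ^ 2 = 2 := sq_sqrt zero_le_two
  have h1 : 1 < √2 + 1 := by simp
  rw [two_mul_arctan_add_pi h1, show 2 * (√2 + 1) / (1 - (√2 + 1) ^ 2) = -1 by
    rw [div_eq_iff (by nlinarith)]; linear_combination (-1 : ℝ) * hs, arctan_neg, arctan_one]
  ring

lemma hasDerivAt_affine_div_affine (p q x : ℝ) (hx : 2 * x + q ≠ 0) :
    HasDerivAt (fun y => (2 * y - p) / (2 * y + q)) (2 * (p + q) / (2 * x + q) ^ 2) x := by
  have hA : HasDerivAt (fun y => 2 * y - p) 2 x := by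
    simpa using ((hasDerivAt_id x).const_mul 2).sub_const p
  have hB : HasDerivAt (fun y => 2 * y + q) 2 x := by
    simpa using ((hasDerivAt_id x).const_mul 2).add_const q
  have h := hA.div hB hx
  rwa [show 2 * (2 * x + q) - (2 * x - p) * 2 = 2 * (p + q) by ring] at h

lemma hasDerivAt_arctan_mul_sqrt_affine_div_affine (k p q x : ℝ)
    (hA : 0 < 2 * x - p) (hB : 0 < 2 * x + q) :
    HasDerivAt (fun y => arctan (k * √((2 * y - p) / (2 * y + q))))
      (k * (p + q) / (√((2 * x - p) * (2 * x + q)) * (2 * x + q + k ^ 2 * (2 * x - p)))) x := by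
  have h := (((hasDerivAt_affine_div_affine p q x hB.ne').sqrt
    (div_pos hA hB).ne').const_mul k).arctan
  convert h using 1
  rw [sqrt_mul hA.le, sqrt_div hA.le]
  obtain ⟨a, ha, hp⟩ : ∃ a, 0 < a ∧ p = 2 * x - a ^ 2 :=
    ⟨√(2 * x - p), sqrt_pos.2 hA, by rw [sq_sqrt hA.le]; ring⟩
  obtain ⟨β, hβ, hq⟩ : ∃ β, 0 < β ∧ q = β ^ 2 - 2 * x :=
    ⟨√(2 * x + q), sqrt_pos.2 hB, by rw [sq_sqrt hB.le]; ring⟩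
  subst hp hq
  simp only [sub_sub_cancel, add_sub_cancel, sqrt_sq ha.le, sqrt_sq hβ.le]
  field_simp

lemma tendsto_affine_div_affine_atTop (p q : ℝ) :
    Tendsto (fun y => (2 * y - p) / (2 * y + q)) atTop (𝓝 1) := by
  have hB : Tendsto (fun y : ℝ => 2 * y + q) atTop atTop :=
    tendsto_atTop_add_const_right _ q (tendsto_id.const_mul_atTop two_pos)
  have h := (tendsto_const_nhds (x := p + q)).div_atTop hB
  rw [← sub_zero (1 : ℝ)]
  refine (tendsto_const_nhds.sub h).congr' ?_
  filter_upwards [hB.eventually_gt_atTop 0] with y hy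
  field_simp
  ring

lemma tendsto_arctan_mul_sqrt_affine_div_affine_atTop (k p q : ℝ) :
    Tendsto (fun y => arctan (k * √((2 * y - p) / (2 * y + q)))) atTop (𝓝 (arctan k)) := by
  have h := (continuous_sqrt.tendsto 1).comp (tendsto_affine_div_affine_atTop p q)
  rw [sqrt_one] at h
  simpa [Function.comp_def] using (continuous_arctan.tendsto (k * 1)).comp (h.const_mul k)

section

variable {b ρ : ℝ}

lemma sub_sq_div_four_mul_sub_eq (hρ : ρ ≠ b) :
    ρ - b ^ 2 / (4 * (ρ - b)) =
      (2 * ρ - (√2 + 1) * b) * (2 * ρ + (√2 - 1) * b) / (4 * (ρ - b)) := by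
  have hs : √2 ^ 2 = 2 := sq_sqrt zero_le_two
  rw [eq_div_iff (by simpa [sub_eq_zero] using hρ)]
  field_simp [sub_ne_zero.2 hρ]
  linear_combination b ^ 2 * hs

lemma neg_two_mul_neg_div_div_eq_sq (hA : 0 < 2 * ρ - (√2 + 1) * b)
    (hB : 0 < 2 * ρ + (√2 - 1) * b) (hρ : b < ρ) :
    -2 * (-(b ^ 2 / (2 * (ρ - b) ^ 3))) / (ρ - b ^ 2 / (4 * (ρ - b))) =
      (2 * b / ((ρ - b) * √((2 * ρ - (√2 + 1) * b) * (2 * ρ + (√2 - 1) * b)))) ^ 2 := by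
  rw [sub_sq_div_four_mul_sub_eq hρ.ne']
  simp only [div_pow, mul_pow, sq_sqrt (mul_pos hA hB).le]
  have hρb := sub_pos.2 hρ
  field_simp
  ring

lemma four_mul_arctan_deriv_eq (hA : 0 < 2 * ρ - (√2 + 1) * b)
    (hB : 0 < 2 * ρ + (√2 - 1) * b) (hρ : b < ρ) :
    4 * ((√2 + 1) * ((√2 + 1) * b + (√2 - 1) * b) /
        (√((2 * ρ - (√2 + 1) * b) * (2 * ρ + (√2 - 1) * b)) *
          (2 * ρ + (√2 - 1) * b + (√2 + 1) ^ 2 * (2 * ρ - (√2 + 1) * b)))) =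
      2 * b / ((ρ - b) * √((2 * ρ - (√2 + 1) * b) * (2 * ρ + (√2 - 1) * b))) := by
  have hs : √2 ^ 2 = 2 := sq_sqrt zero_le_two
  have hρb := sub_pos.2 hρ
  have hden : 2 * ρ + (√2 - 1) * b + (√2 + 1) ^ 2 * (2 * ρ - (√2 + 1) * b) =
      4 * (2 + √2) * (ρ - b) := by
    linear_combination (2 * ρ - (√2 + 3) * b) * hs
  have hS := sqrt_pos.2 (mul_pos hA hB)
  rw [hden]
  generalize √((2 * ρ - (√2 + 1) * b) * (2 * ρ + (√2 - 1) * b)) = S at hS ⊢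
  field_simp
  linear_combination (2 * b) * hs

end

/-- For `r(ρ) = ρ − b²/(4(ρ−b))` with `b > 0` and center `c = (√2+1)b/2`
(the unique zero of `r` in `(b,∞)`), the scalar field
`φ(ρ) = 3π/2 − 4 arctan((√2+1)√((2ρ−(√2+1)b)/(2ρ+(√2−1)b)))`
satisfies `φ' = −√(−2r''/r)` on `(c,∞)` (with `r'' = −b²/(2(ρ−b)³)`) and `φ → 0`
at infinity. -/
theorem stmt19 (b c : ℝ) (hb : 0 < b) (hcb : c = (Real.sqrt 2 + 1) * b / 2)
    (r φ : ℝ → ℝ)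
    (hr : ∀ ρ : ℝ, r ρ = ρ - b ^ 2 / (4 * (ρ - b)))
    (hφ : ∀ ρ : ℝ, φ ρ = 3 * Real.pi / 2 - 4 * Real.arctan ((Real.sqrt 2 + 1) *
      Real.sqrt ((2 * ρ - (Real.sqrt 2 + 1) * b) / (2 * ρ + (Real.sqrt 2 - 1) * b)))) :
    r c = 0 ∧ (∀ ρ ∈ Set.Ioi c, 0 < r ρ) ∧
    (∀ ρ ∈ Set.Ioi c,
      HasDerivAt φ (-Real.sqrt (-2 * (-(b ^ 2 / (2 * (ρ - b) ^ 3))) / r ρ)) ρ) ∧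
    Tendsto φ atTop (nhds 0) := by
  have hsqrt2 := one_lt_sqrt_two
  have hφ : φ = fun ρ => 3 * π / 2 - 4 * arctan ((√2 + 1) *
      √((2 * ρ - (√2 + 1) * b) / (2 * ρ + (√2 - 1) * b))) := funext hφ
  have hbc : b < c := by rw [hcb]; nlinarith
  have hfactors : ∀ ρ ∈ Ioi c,
      0 < 2 * ρ - (√2 + 1) * b ∧ 0 < 2 * ρ + (√2 - 1) * b ∧ b < ρ := fun ρ hρ => by
    rw [mem_Ioi, hcb] at hρ
    exact ⟨by linarith, by nlinarith, by linarith⟩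
  refine ⟨?_, fun ρ hρ => ?_, fun ρ hρ => ?_, ?_⟩
  · rw [hr, sub_sq_div_four_mul_sub_eq hbc.ne', hcb]
    ring
  · obtain ⟨hA, hB, hbρ⟩ := hfactors ρ hρ
    rw [hr, sub_sq_div_four_mul_sub_eq hbρ.ne']
    exact div_pos (mul_pos hA hB) (by linarith)
  · obtain ⟨hA, hB, hbρ⟩ := hfactors ρ hρ
    rw [hr, neg_two_mul_neg_div_div_eq_sq hA hB hbρ, sqrt_sq (by positivity),
      ← four_mul_arctan_deriv_eq hA hB hbρ, hφ]
    simpa using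
      ((hasDerivAt_arctan_mul_sqrt_affine_div_affine _ _ _ ρ hA hB).const_mul 4).const_sub
        (3 * π / 2)
  · have h := tendsto_const_nhds (x := 3 * π / 2) |>.sub
      ((tendsto_arctan_mul_sqrt_affine_div_affine_atTop (√2 + 1) ((√2 + 1) * b)
        ((√2 - 1) * b)).const_mul 4)
    rwa [show 3 * π / 2 - 4 * arctan (√2 + 1) = 0 by
      linarith [two_mul_arctan_sqrt_two_add_one], ← hφ] at h
end
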